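/- arXiv:2008.00907 — 2 statements merged into one kernel-verified Lean document; each statement's English description precedes it below -/
import Mathlib

section
/- Let Γ be a consistent extension of Δ⁰₁-comprehension that proves the existence of a universal Σ⁰₁ formula, and let P and Q be Π¹₂-problems. The following are equivalent: (1) Player 2 has a computable winning strategy for G^Γ(Q → P); (2) Player 2 has a computable winning strategy for Ĝ^Γ(Q → P); (3) there is an n ∈ ω such that Player 2 has a computable strategy for G^Γ(Q → P) that ensures victory in at most n many moves; (4) there is an n ∈ ω such that Player 2 has a computable strategy for Ĝ^Γ(Q → P) that ensures victory in at most n many moves. Furthermore, n witnesses (3) if and only if it witnesses (4). -/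
/-!
A deep embedding of second-order arithmetic (with Henkin/two-sorted first-order semantics),
Π¹₂-problems, and the reduction games of Hirschfeldt–Jockusch type.

Provability `Proves Γ φ` is rendered as semantic consequence over all (Henkin) models;
by the Gödel completeness theorem for (two-sorted) first-order logic this coincides with
derivability from `Γ`.
-/

namespace SOA

/-- An `L₁`-structure (a structure in the language of first-order arithmetic). -/
structure L1Struc where
  carrier : Type
  zero : carrier
  one : carrier
  add : carrier → carrier → carrier
  mul : carrier → carrier → carrier
  lt : carrier → carrier → Prop

/-- The standard natural numbers as an `L₁`-structure. -/
abbrev stdM : L1Struc where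
  carrier := ℕ
  zero := 0
  one := 1
  add := (· + ·)
  mul := (· * ·)
  lt := (· < ·)

/-- Number terms of `L₁`/`L₂`, with named variables. -/
inductive Term : Type where
  | var : ℕ → Term
  | zero : Term
  | one : Term
  | add : Term → Term → Term
  | mul : Term → Term → Term

def Term.val (M : L1Struc) (v : ℕ → M.carrier) : Term → M.carrier
  | .var i => v i
  | .zero => M.zero
  | .one => M.one
  | .add t s => M.add (t.val M v) (s.val M v)
  | .mul t s => M.mul (t.val M v) (s.val M v)

def Term.fv : Term → Set ℕ
  | .var i => {i}
  | .zero => ∅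
  | .one => ∅
  | .add t s => t.fv ∪ s.fv
  | .mul t s => t.fv ∪ s.fv

/-- Formulas of `L₂`; number variables and set variables are indexed by `ℕ`. -/
inductive Formula : Type where
  | eq : Term → Term → Formula
  | lt : Term → Term → Formula
  | mem : Term → ℕ → Formula
  | not : Formula → Formula
  | and : Formula → Formula → Formula
  | or : Formula → Formula → Formula
  | imp : Formula → Formula → Formula
  | allN : ℕ → Formula → Formula
  | exN : ℕ → Formula → Formula
  | allS : ℕ → Formula → Formula
  | exS : ℕ → Formula → Formula

def Formula.iff (φ ψ : Formula) : Formula := (φ.imp ψ).and (ψ.imp φ)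

/-- Tarskian satisfaction; set quantifiers range over the second-order domain `D`. -/
def Formula.Sat (M : L1Struc) (D : Set (Set M.carrier)) :
    (ℕ → M.carrier) → (ℕ → Set M.carrier) → Formula → Prop
  | v, _, .eq t s => t.val M v = s.val M v
  | v, _, .lt t s => M.lt (t.val M v) (s.val M v)
  | v, V, .mem t X => t.val M v ∈ V X
  | v, V, .not φ => ¬ Formula.Sat M D v V φ
  | v, V, .and φ ψ => Formula.Sat M D v V φ ∧ Formula.Sat M D v V ψ
  | v, V, .or φ ψ => Formula.Sat M D v V φ ∨ Formula.Sat M D v V ψ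
  | v, V, .imp φ ψ => Formula.Sat M D v V φ → Formula.Sat M D v V ψ
  | v, V, .allN x φ => ∀ a : M.carrier, Formula.Sat M D (Function.update v x a) V φ
  | v, V, .exN x φ => ∃ a : M.carrier, Formula.Sat M D (Function.update v x a) V φ
  | v, V, .allS X φ => ∀ A ∈ D, Formula.Sat M D v (Function.update V X A) φ
  | v, V, .exS X φ => ∃ A ∈ D, Formula.Sat M D v (Function.update V X A) φ

/-- Free number variables. -/
def Formula.numFV : Formula → Set ℕ
  | .eq t s => t.fv ∪ s.fv
  | .lt t s => t.fv ∪ s.fv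
  | .mem t _ => t.fv
  | .not φ => φ.numFV
  | .and φ ψ => φ.numFV ∪ ψ.numFV
  | .or φ ψ => φ.numFV ∪ ψ.numFV
  | .imp φ ψ => φ.numFV ∪ ψ.numFV
  | .allN x φ => φ.numFV \ {x}
  | .exN x φ => φ.numFV \ {x}
  | .allS _ φ => φ.numFV
  | .exS _ φ => φ.numFV

/-- Free set variables. -/
def Formula.setFV : Formula → Set ℕ
  | .eq _ _ => ∅
  | .lt _ _ => ∅
  | .mem _ X => {X}
  | .not φ => φ.setFV
  | .and φ ψ => φ.setFV ∪ ψ.setFV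
  | .or φ ψ => φ.setFV ∪ ψ.setFV
  | .imp φ ψ => φ.setFV ∪ ψ.setFV
  | .allN _ φ => φ.setFV
  | .exN _ φ => φ.setFV
  | .allS X φ => φ.setFV \ {X}
  | .exS X φ => φ.setFV \ {X}

/-- Arithmetic formulas: no set quantifiers (set variables may occur free). -/
def Formula.IsArithmetic : Formula → Prop
  | .eq _ _ => True
  | .lt _ _ => True
  | .mem _ _ => True
  | .not φ => φ.IsArithmetic
  | .and φ ψ => φ.IsArithmetic ∧ ψ.IsArithmetic
  | .or φ ψ => φ.IsArithmetic ∧ ψ.IsArithmetic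
  | .imp φ ψ => φ.IsArithmetic ∧ ψ.IsArithmetic
  | .allN _ φ => φ.IsArithmetic
  | .exN _ φ => φ.IsArithmetic
  | .allS _ _ => False
  | .exS _ _ => False

/-- Δ⁰₀ (bounded) formulas. -/
inductive IsDelta0 : Formula → Prop
  | eq (t s : Term) : IsDelta0 (.eq t s)
  | lt (t s : Term) : IsDelta0 (.lt t s)
  | mem (t : Term) (X : ℕ) : IsDelta0 (.mem t X)
  | not {φ} : IsDelta0 φ → IsDelta0 (.not φ)
  | and {φ ψ} : IsDelta0 φ → IsDelta0 ψ → IsDelta0 (.and φ ψ)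
  | or {φ ψ} : IsDelta0 φ → IsDelta0 ψ → IsDelta0 (.or φ ψ)
  | imp {φ ψ} : IsDelta0 φ → IsDelta0 ψ → IsDelta0 (.imp φ ψ)
  | ballLt {φ} (x : ℕ) (t : Term) : x ∉ t.fv → IsDelta0 φ →
      IsDelta0 (.allN x (.imp (.lt (.var x) t) φ))
  | bexLt {φ} (x : ℕ) (t : Term) : x ∉ t.fv → IsDelta0 φ →
      IsDelta0 (.exN x (.and (.lt (.var x) t) φ))

/-- Σ⁰₁ formulas: existential number quantifiers over a Δ⁰₀ matrix. -/
inductive IsSigma01 : Formula → Prop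
  | delta0 {φ} : IsDelta0 φ → IsSigma01 φ
  | exN {φ} (x : ℕ) : IsSigma01 φ → IsSigma01 (.exN x φ)

/-- Π⁰₁ formulas. -/
inductive IsPi01 : Formula → Prop
  | delta0 {φ} : IsDelta0 φ → IsPi01 φ
  | allN {φ} (x : ℕ) : IsPi01 φ → IsPi01 (.allN x φ)

/-- Σ⁰₂ formulas. -/
inductive IsSigma02 : Formula → Prop
  | pi01 {φ} : IsPi01 φ → IsSigma02 φ
  | exN {φ} (x : ℕ) : IsSigma02 φ → IsSigma02 (.exN x φ)

/-- Π¹₁ formulas: universal set quantifiers over an arithmetic matrix. -/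
inductive IsPi11 : Formula → Prop
  | arith {φ} : φ.IsArithmetic → IsPi11 φ
  | allS {φ} (X : ℕ) : IsPi11 φ → IsPi11 (.allS X φ)

/-- Quantifier-free `L₁`-formulas (no set variables, no quantifiers). -/
inductive IsQFL1 : Formula → Prop
  | eq (t s : Term) : IsQFL1 (.eq t s)
  | lt (t s : Term) : IsQFL1 (.lt t s)
  | not {φ} : IsQFL1 φ → IsQFL1 (.not φ)
  | and {φ ψ} : IsQFL1 φ → IsQFL1 ψ → IsQFL1 (.and φ ψ)
  | or {φ ψ} : IsQFL1 φ → IsQFL1 ψ → IsQFL1 (.or φ ψ)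
  | imp {φ ψ} : IsQFL1 φ → IsQFL1 ψ → IsQFL1 (.imp φ ψ)

/-- Existential `L₁`-formulas. -/
inductive IsExistentialL1 : Formula → Prop
  | qf {φ} : IsQFL1 φ → IsExistentialL1 φ
  | exN {φ} (x : ℕ) : IsExistentialL1 φ → IsExistentialL1 (.exN x φ)

def Term.subst (x : ℕ) (t : Term) : Term → Term
  | .var i => if i = x then t else .var i
  | .zero => .zero
  | .one => .one
  | .add a b => .add (Term.subst x t a) (Term.subst x t b)
  | .mul a b => .mul (Term.subst x t a) (Term.subst x t b)

/-- Substitution of the term `t` for the number variable `x` (used only with terms all of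
whose variables are `x` itself, where it is capture-free). -/
def Formula.substN (x : ℕ) (t : Term) : Formula → Formula
  | .eq a b => .eq (Term.subst x t a) (Term.subst x t b)
  | .lt a b => .lt (Term.subst x t a) (Term.subst x t b)
  | .mem a X => .mem (Term.subst x t a) X
  | .not φ => .not (φ.substN x t)
  | .and φ ψ => .and (φ.substN x t) (ψ.substN x t)
  | .or φ ψ => .or (φ.substN x t) (ψ.substN x t)
  | .imp φ ψ => .imp (φ.substN x t) (ψ.substN x t)
  | .allN y φ => if y = x then .allN y φ else .allN y (φ.substN x t)
  | .exN y φ => if y = x then .exN y φ else .exN y (φ.substN x t)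
  | .allS X φ => .allS X (φ.substN x t)
  | .exS X φ => .exS X (φ.substN x t)

/-- `(M,S)` is a model of the theory `Γ` (schemes are read with free variables as
universally quantified parameters). -/
def Models2 (M : L1Struc) (S : Set (Set M.carrier)) (Γ : Set Formula) : Prop :=
  ∀ φ ∈ Γ, ∀ (v : ℕ → M.carrier) (V : ℕ → Set M.carrier), (∀ i, V i ∈ S) → φ.Sat M S v V

/-- `Γ ⊢ φ`, rendered as semantic consequence over all Henkin models (equivalently,
derivability, by the Gödel completeness theorem). -/
def Proves (Γ : Set Formula) (φ : Formula) : Prop :=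
  ∀ (M : L1Struc) (S : Set (Set M.carrier)), Models2 M S Γ →
    ∀ (v : ℕ → M.carrier) (V : ℕ → Set M.carrier), (∀ i, V i ∈ S) → φ.Sat M S v V

/-- `Γ` is consistent (has a model). -/
def SemConsistent (Γ : Set Formula) : Prop :=
  ∃ (M : L1Struc) (S : Set (Set M.carrier)), Models2 M S Γ

/-- The Δ⁰₁-comprehension scheme. -/
def Delta01CA : Set Formula :=
  { F | ∃ (φ₀ φ₁ : Formula) (x X : ℕ), IsSigma01 φ₀ ∧ IsSigma01 φ₁ ∧
      X ∉ φ₀.setFV ∧ X ∉ φ₁.setFV ∧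
      F = .imp (.allN x (Formula.iff φ₀ (.not φ₁)))
            (.exS X (.allN x (Formula.iff (.mem (.var x) X) φ₀))) }

/-- The Σ⁰₁-induction scheme. -/
def ISigma01 : Set Formula :=
  { F | ∃ (φ : Formula) (x : ℕ), IsSigma01 φ ∧
      F = .imp (.and (φ.substN x .zero) (.allN x (.imp φ (φ.substN x (.add (.var x) .one)))))
            (.allN x φ) }

def ax1 : Formula := .not (.eq (.add (.var 0) .one) .zero)
def ax2 : Formula := .imp (.eq (.add (.var 0) .one) (.add (.var 1) .one)) (.eq (.var 0) (.var 1))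
def ax3 : Formula := .eq (.add (.var 0) .zero) (.var 0)
def ax4 : Formula := .eq (.add (.var 0) (.add (.var 1) .one)) (.add (.add (.var 0) (.var 1)) .one)
def ax5 : Formula := .eq (.mul (.var 0) .zero) .zero
def ax6 : Formula := .eq (.mul (.var 0) (.add (.var 1) .one)) (.add (.mul (.var 0) (.var 1)) (.var 0))
def ax7 : Formula := .not (.lt (.var 0) .zero)
def ax8 : Formula :=
  Formula.iff (.lt (.var 0) (.add (.var 1) .one)) (.or (.lt (.var 0) (.var 1)) (.eq (.var 0) (.var 1)))

/-- The basic (PA⁻) axioms of `RCA₀`. -/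
def BasicAx : Set Formula := {ax1, ax2, ax3, ax4, ax5, ax6, ax7, ax8}

/-- The theory `RCA₀`. -/
def RCA0 : Set Formula := BasicAx ∪ ISigma01 ∪ Delta01CA

/-- The Σ⁰₂-bounding scheme `BΣ⁰₂`. -/
def BSigma02 : Set Formula :=
  { F | ∃ (φ : Formula) (n i k b : ℕ), IsSigma02 φ ∧
      n ∉ φ.numFV ∧ b ∉ φ.numFV ∧
      n ≠ i ∧ n ≠ k ∧ n ≠ b ∧ i ≠ k ∧ i ≠ b ∧ k ≠ b ∧
      F = .allN n (.imp (.allN i (.imp (.lt (.var i) (.var n)) (.exN k φ)))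
            (.exN b (.allN i (.imp (.lt (.var i) (.var n))
              (.exN k (.and (.or (.lt (.var k) (.var b)) (.eq (.var k) (.var b))) φ)))))) }

/-- The Π¹₁ sentences true in the standard model `(ℕ, 𝒫(ℕ))`. -/
def TruePi11 : Set Formula :=
  { φ | IsPi11 φ ∧ φ.numFV = ∅ ∧ φ.setFV = ∅ ∧
        φ.Sat stdM Set.univ (fun _ => stdM.zero) (fun _ => (∅ : Set stdM.carrier)) }

/-- `Γ` is an extension of Δ⁰₁-comprehension by Π¹₁ formulas. -/
def ExtByPi11 (Γ : Set Formula) : Prop :=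
  Delta01CA ⊆ Γ ∧ ∀ φ ∈ Γ, φ ∈ Delta01CA ∨ IsPi11 φ

/-! ### Π¹₂-problems -/

/-- A Π¹₂-problem, given by arithmetic formulas `Θ(X)` (set variable `0`) and
`Ψ(X,Y)` (set variables `0`, `1`). -/
structure Pi12Problem where
  theta : Formula
  psi : Formula

def Pi12Problem.WellFormed (P : Pi12Problem) : Prop :=
  P.theta.IsArithmetic ∧ P.psi.IsArithmetic ∧
  P.theta.numFV = ∅ ∧ P.psi.numFV = ∅ ∧
  P.theta.setFV ⊆ {0} ∧ P.psi.setFV ⊆ {0, 1}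

/-- `X` is an `M`-instance of `P`. -/
def Pi12Problem.Inst (P : Pi12Problem) (M : L1Struc) (X : Set M.carrier) : Prop :=
  P.theta.Sat M Set.univ (fun _ => M.zero) (fun _ => X)

/-- `Y` is a solution to the `M`-instance `X` of `P`. -/
def Pi12Problem.Sol (P : Pi12Problem) (M : L1Struc) (X Y : Set M.carrier) : Prop :=
  P.psi.Sat M Set.univ (fun _ => M.zero) (fun i => if i = 0 then X else Y)

/-- The sentence `∀X (Θ(X) → ∃Y Ψ(X,Y))`. -/
def Pi12Problem.toSentence (P : Pi12Problem) : Formula :=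
  .allS 0 (.imp P.theta (.exS 1 P.psi))

/-! ### Δ⁰₁-definability, `M[X₀,…,Xₙ]`, consistency with a theory -/

/-- `X` is Δ⁰₁-definable over `M` with number parameters and set parameters from `Ps`. -/
def Delta1Def (M : L1Struc) (Ps : Set (Set M.carrier)) (X : Set M.carrier) : Prop :=
  ∃ (φ₀ φ₁ : Formula) (x : ℕ) (v : ℕ → M.carrier) (V : ℕ → Set M.carrier),
    IsSigma01 φ₀ ∧ IsSigma01 φ₁ ∧
    (∀ i ∈ φ₀.setFV ∪ φ₁.setFV, V i ∈ Ps) ∧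
    (∀ a, φ₀.Sat M Set.univ (Function.update v x a) V ↔
          ¬ φ₁.Sat M Set.univ (Function.update v x a) V) ∧
    X = {a | φ₀.Sat M Set.univ (Function.update v x a) V}

/-- The second-order part of `M[X₀,…,Xₙ]` for `Ps = {X₀,…,Xₙ}`. -/
def Mcl (M : L1Struc) (Ps : Set (Set M.carrier)) : Set (Set M.carrier) :=
  { X | Delta1Def M Ps X }

def histL (M : L1Struc) (f : ℕ → Set M.carrier) (n : ℕ) : List (Set M.carrier) :=
  (List.range (n+1)).map f

/-- The structure `M[X₀,…,Xₙ]` determined by a history of Player 1 moves. -/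
def Board (M : L1Struc) (hist : List (Set M.carrier)) : Set (Set M.carrier) :=
  Mcl M { X | X ∈ hist }

/-- An `L₂`-structure `(M,S)` is consistent with `Γ`: it is contained in a model of `Γ`
with the same first-order part. -/
def ConsWith (M : L1Struc) (S : Set (Set M.carrier)) (Γ : Set Formula) : Prop :=
  ∃ T, S ⊆ T ∧ Models2 M T Γ

/-- `S` is closed under Δ⁰₁-comprehension (with parameters from `S`). -/
def D01Closed (M : L1Struc) (S : Set (Set M.carrier)) : Prop :=
  ∀ X, Delta1Def M S X → X ∈ S

/-- The join `X ⊕ Y` inside `M`. -/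
def joinM (M : L1Struc) (X Y : Set M.carrier) : Set M.carrier :=
  { c | (∃ a ∈ X, c = M.add a a) ∨ (∃ a ∈ Y, c = M.add (M.add a a) M.one) }

/-- `X₀ ⊕ X₁ ⊕ ⋯ ⊕ Xₙ` (associated to the left). -/
def joinList (M : L1Struc) : List (Set M.carrier) → Set M.carrier
  | [] => ∅
  | X :: rest => rest.foldl (joinM M) X

/-- Numerals in `M`. -/
def numM (M : L1Struc) : ℕ → M.carrier
  | 0 => M.zero
  | n+1 => M.add (numM M n) M.one

/-! ### Reduction games

A run is given by Player 1's moves `f 0, f 1, …` and Player 2's moves `g 0, g 1, …`,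
where `g n` is Player 2's reply (a victory flag together with a set) to `f 0, …, f n`.
`C` is the side condition on Player 1's histories (consistency with `Γ` for `G^Γ`,
membership in `S` for the modified game `Ĝ^Γ`, trivial for the game over `ω`). -/

/-- The run is still alive after Player 1's move at stage `n` (all moves so far legal,
Player 2 has not yet declared victory). -/
def Alive (P Q : Pi12Problem) (M : L1Struc) (C : List (Set M.carrier) → Prop)
    (f : ℕ → Set M.carrier) (g : ℕ → Prop × Set M.carrier) : ℕ → Prop
  | 0 => P.Inst M (f 0) ∧ C (histL M f 0)
  | n+1 => Alive P Q M C f g n ∧ ¬ (g n).1 ∧ (g n).2 ∈ Board M (histL M f n) ∧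
      Q.Inst M ((g n).2) ∧ Q.Sol M ((g n).2) (f (n+1)) ∧ C (histL M f (n+1))

/-- Player 2's move at stage `n` is a legal winning move. -/
def P2WinMove (P : Pi12Problem) (M : L1Struc) (f : ℕ → Set M.carrier)
    (g : ℕ → Prop × Set M.carrier) (n : ℕ) : Prop :=
  (g n).1 ∧ (g n).2 ∈ Board M (histL M f n) ∧ P.Sol M (f 0) ((g n).2)

/-- Player 2's move at stage `n` is a legal continuing move (an instance of `Q`). -/
def P2ContMove (Q : Pi12Problem) (M : L1Struc) (f : ℕ → Set M.carrier)
    (g : ℕ → Prop × Set M.carrier) (n : ℕ) : Prop :=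
  ¬ (g n).1 ∧ (g n).2 ∈ Board M (histL M f n) ∧ Q.Inst M ((g n).2)

/-- Player 2 wins the run `(f,g)`: its moves are always legal while the run is alive, and
the run does not go on forever. -/
def P2WinsRun (P Q : Pi12Problem) (M : L1Struc) (C : List (Set M.carrier) → Prop)
    (f : ℕ → Set M.carrier) (g : ℕ → Prop × Set M.carrier) : Prop :=
  (∀ n, Alive P Q M C f g n → (P2ContMove Q M f g n ∨ P2WinMove P M f g n)) ∧
  ¬ (∀ n, Alive P Q M C f g n)

/-- Player 2 wins the run `(f,g)` within at most `n₀` moves. -/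
def P2WinsRunWithin (P Q : Pi12Problem) (M : L1Struc) (C : List (Set M.carrier) → Prop)
    (f : ℕ → Set M.carrier) (g : ℕ → Prop × Set M.carrier) (n₀ : ℕ) : Prop :=
  (∀ n, Alive P Q M C f g n → (P2ContMove Q M f g n ∨ P2WinMove P M f g n)) ∧
  ¬ Alive P Q M C f g n₀

/-- Side condition for `G^Γ`: each `M[X₀,…,Xₙ]` must be consistent with `Γ`. -/
def CondG (Γ : Set Formula) (M : L1Struc) (hist : List (Set M.carrier)) : Prop :=
  ConsWith M (Board M hist) Γ

/-- Side condition for `Ĝ^Γ`: Player 1's moves must lie in `S`. -/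
def CondS (M : L1Struc) (S : Set (Set M.carrier)) (hist : List (Set M.carrier)) : Prop :=
  ∀ X ∈ hist, X ∈ S

/-- Player 2 has a winning strategy for `G^Γ(Q → P)`. -/
def P2HasWinG (Γ : Set Formula) (P Q : Pi12Problem) : Prop :=
  ∃ σ : (M : L1Struc) → List (Set M.carrier) → Prop × Set M.carrier,
    ∀ M : L1Struc, Countable M.carrier → ∀ f,
      P2WinsRun P Q M (CondG Γ M) f (fun n => σ M (histL M f n))

/-- Player 2 has a winning strategy for `G^Γ(Q → P)` ensuring victory within `n₀` moves. -/
def P2HasWinGWithin (Γ : Set Formula) (P Q : Pi12Problem) (n₀ : ℕ) : Prop :=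
  ∃ σ : (M : L1Struc) → List (Set M.carrier) → Prop × Set M.carrier,
    ∀ M : L1Struc, Countable M.carrier → ∀ f,
      P2WinsRunWithin P Q M (CondG Γ M) f (fun n => σ M (histL M f n)) n₀

/-- Player 2 has a winning strategy for the modified game `Ĝ^Γ(Q → P)`. -/
def P2HasWinHat (Γ : Set Formula) (P Q : Pi12Problem) : Prop :=
  ∃ σ : (M : L1Struc) → Set (Set M.carrier) → List (Set M.carrier) → Prop × Set M.carrier,
    ∀ (M : L1Struc) (S : Set (Set M.carrier)), Countable M.carrier →
      Models2 M S Γ → D01Closed M S → ∀ f,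
        P2WinsRun P Q M (CondS M S) f (fun n => σ M S (histL M f n))

/-- Player 2 has a winning strategy for `Ĝ^Γ(Q → P)` ensuring victory within `n₀` moves. -/
def P2HasWinHatWithin (Γ : Set Formula) (P Q : Pi12Problem) (n₀ : ℕ) : Prop :=
  ∃ σ : (M : L1Struc) → Set (Set M.carrier) → List (Set M.carrier) → Prop × Set M.carrier,
    ∀ (M : L1Struc) (S : Set (Set M.carrier)), Countable M.carrier →
      Models2 M S Γ → D01Closed M S → ∀ f,
        P2WinsRunWithin P Q M (CondS M S) f (fun n => σ M S (histL M f n)) n₀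

/-- A strategy for Player 1 in `G^Γ`. -/
structure P1StratG where
  M : L1Struc
  first : Set M.carrier
  next : List (Prop × Set M.carrier) → Set M.carrier

def P1StratG.play (τ : P1StratG) (g : ℕ → Prop × Set τ.M.carrier) : ℕ → Set τ.M.carrier
  | 0 => τ.first
  | n+1 => τ.next ((List.range (n+1)).map g)

/-- Player 1 wins the run `(f,g)`: the first move is legal, Player 2 never makes a legal
winning move, and Player 1 can always respond legally. -/
def P1WinsRun (P Q : Pi12Problem) (M : L1Struc) (C : List (Set M.carrier) → Prop)
    (f : ℕ → Set M.carrier) (g : ℕ → Prop × Set M.carrier) : Prop :=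
  Alive P Q M C f g 0 ∧
  ∀ n, Alive P Q M C f g n →
    (¬ P2WinMove P M f g n ∧ (P2ContMove Q M f g n → Alive P Q M C f g (n+1)))

/-- Player 1 has a winning strategy for `G^Γ(Q → P)`. -/
def P1HasWinG (Γ : Set Formula) (P Q : Pi12Problem) : Prop :=
  ∃ τ : P1StratG, Countable τ.M.carrier ∧
    ∀ g, P1WinsRun P Q τ.M (CondG Γ τ.M) (τ.play g) g

/-- A strategy for Player 1 in the modified game `Ĝ^Γ` (its first move includes a model `(M,S)`). -/
structure P1StratHat where
  M : L1Struc
  S : Set (Set M.carrier)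
  first : Set M.carrier
  next : List (Prop × Set M.carrier) → Set M.carrier

def P1StratHat.play (τ : P1StratHat) (g : ℕ → Prop × Set τ.M.carrier) : ℕ → Set τ.M.carrier
  | 0 => τ.first
  | n+1 => τ.next ((List.range (n+1)).map g)

/-- Player 1 has a winning strategy for `Ĝ^Γ(Q → P)`. -/
def P1HasWinHat (Γ : Set Formula) (P Q : Pi12Problem) : Prop :=
  ∃ τ : P1StratHat, Countable τ.M.carrier ∧ Models2 τ.M τ.S Γ ∧ D01Closed τ.M τ.S ∧
    ∀ g, P1WinsRun P Q τ.M (CondS τ.M τ.S) (τ.play g) g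

/-! ### Universal Σ⁰₁ formulas and the functionals `Φₑ` -/

/-- Cantor pairing, as a relation in `M`: `e = ⟨i,j⟩` iff `2e = (i+j)² + (i+j) + 2i`. -/
def cantorPairRel (M : L1Struc) (i j e : M.carrier) : Prop :=
  M.add e e = M.add (M.add (M.mul (M.add i j) (M.add i j)) (M.add i j)) (M.add i i)

/-- Satisfaction of `θ(i, n, X)` (number variables `0`, `1`; set variable `0`). -/
def satIdx (θ : Formula) (M : L1Struc) (i n : M.carrier) (X : Set M.carrier) : Prop :=
  θ.Sat M Set.univ (fun m => if m = 0 then i else if m = 1 then n else M.zero) (fun _ => X)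

/-- `Y = Φₑ^X` in `M`, relative to the universal Σ⁰₁ formula `θ`. -/
def IsPhi (θ : Formula) (M : L1Struc) (e : M.carrier) (X Y : Set M.carrier) : Prop :=
  ∃ i j : M.carrier, cantorPairRel M i j e ∧
    (∀ n, satIdx θ M i n X ↔ ¬ satIdx θ M j n X) ∧
    (∀ n, n ∈ Y ↔ satIdx θ M i n X)

def GoodSigma (φ : Formula) : Prop :=
  IsSigma01 φ ∧ φ.numFV ⊆ {0, 1} ∧ φ.setFV ⊆ {0}

/-- `θ` is a universal Σ⁰₁ formula, provably in `Γ`. -/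
def UnivSigma01 (Γ : Set Formula) (θ : Formula) : Prop :=
  GoodSigma θ ∧ ∀ φ, GoodSigma φ →
    ∀ (M : L1Struc) (S : Set (Set M.carrier)), Models2 M S Γ →
      ∀ e : M.carrier, ∃ i : M.carrier, ∀ n : M.carrier, ∀ X ∈ S,
        (satIdx θ M i n X ↔ satIdx φ M e n X)

/-- `θ` is a universal Σ⁰₁ formula over the standard model. -/
def UnivSigma01Std (θ : Formula) : Prop :=
  GoodSigma θ ∧ ∀ φ, GoodSigma φ →
    ∀ e : stdM.carrier, ∃ i : stdM.carrier, ∀ (n : stdM.carrier) (X : Set stdM.carrier),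
      (satIdx θ stdM i n X ↔ satIdx φ stdM e n X)

/-! ### Computable strategies for Player 2 -/

/-- The move prescribed by the computable strategy with index `k` at the given history:
Player 2 plays `Z = Φ_e^{X₀⊕⋯⊕Xₙ}` where `e = Φ_k(n)`; by the coding convention, `Z`
declares victory iff `0 ∈ Z`, with payload `{a : a+1 ∈ Z}`. -/
def CodeMove (θ : Formula) (M : L1Struc) (k : Nat.Partrec.Code)
    (hist : List (Set M.carrier)) (mv : Prop × Set M.carrier) : Prop :=
  ∃ e : ℕ, e ∈ k.eval (hist.length - 1) ∧
    ∃ Z : Set M.carrier, IsPhi θ M (numM M e) (joinList M hist) Z ∧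
      mv = ((M.zero ∈ Z), { a | M.add a M.one ∈ Z })

/-- The computable strategy `k` wins every run of the game over `M` with side condition `C`. -/
def P2CompWinsC (θ : Formula) (k : Nat.Partrec.Code) (P Q : Pi12Problem) (M : L1Struc)
    (C : List (Set M.carrier) → Prop) : Prop :=
  ∀ f g,
    ((∀ n, (∀ m < n, Alive P Q M C f g m → CodeMove θ M k (histL M f m) (g m)) →
        Alive P Q M C f g n → ∃ mv, CodeMove θ M k (histL M f n) mv) ∧
     ((∀ n, Alive P Q M C f g n → CodeMove θ M k (histL M f n) (g n)) →
        P2WinsRun P Q M C f g))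

def P2CompWinsCWithin (θ : Formula) (k : Nat.Partrec.Code) (P Q : Pi12Problem) (M : L1Struc)
    (C : List (Set M.carrier) → Prop) (n₀ : ℕ) : Prop :=
  ∀ f g,
    ((∀ n, (∀ m < n, Alive P Q M C f g m → CodeMove θ M k (histL M f m) (g m)) →
        Alive P Q M C f g n → ∃ mv, CodeMove θ M k (histL M f n) mv) ∧
     ((∀ n, Alive P Q M C f g n → CodeMove θ M k (histL M f n) (g n)) →
        P2WinsRunWithin P Q M C f g n₀))

/-- Player 2 has a computable winning strategy for `G^Γ(Q → P)`. -/
def P2CompWinsG (Γ : Set Formula) (θ : Formula) (P Q : Pi12Problem) : Prop :=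
  ∃ k : Nat.Partrec.Code, ∀ M : L1Struc, Countable M.carrier →
    P2CompWinsC θ k P Q M (CondG Γ M)

def P2CompWinsGWithin (Γ : Set Formula) (θ : Formula) (P Q : Pi12Problem) (n₀ : ℕ) : Prop :=
  ∃ k : Nat.Partrec.Code, ∀ M : L1Struc, Countable M.carrier →
    P2CompWinsCWithin θ k P Q M (CondG Γ M) n₀

/-- Player 2 has a computable winning strategy for `Ĝ^Γ(Q → P)`. -/
def P2CompWinsHat (Γ : Set Formula) (θ : Formula) (P Q : Pi12Problem) : Prop :=
  ∃ k : Nat.Partrec.Code, ∀ (M : L1Struc) (S : Set (Set M.carrier)), Countable M.carrier →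
    Models2 M S Γ → D01Closed M S → P2CompWinsC θ k P Q M (CondS M S)

def P2CompWinsHatWithin (Γ : Set Formula) (θ : Formula) (P Q : Pi12Problem) (n₀ : ℕ) : Prop :=
  ∃ k : Nat.Partrec.Code, ∀ (M : L1Struc) (S : Set (Set M.carrier)), Countable M.carrier →
    Models2 M S Γ → D01Closed M S → P2CompWinsCWithin θ k P Q M (CondS M S) n₀

/-- Player 2 has a computable winning strategy for the game `G(Q → P)` over the standard
natural numbers. -/
def P2CompWinsStd (θ : Formula) (P Q : Pi12Problem) : Prop :=
  ∃ k : Nat.Partrec.Code, P2CompWinsC θ k P Q stdM (fun _ => True)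

def P2CompWinsStdWithin (θ : Formula) (P Q : Pi12Problem) (n₀ : ℕ) : Prop :=
  ∃ k : Nat.Partrec.Code, P2CompWinsCWithin θ k P Q stdM (fun _ => True) n₀

/-- Player 2 has a winning strategy for the game `G(Q → P)` over the standard natural
numbers ensuring victory within `n₀` moves. -/
def P2HasWinStdWithin (P Q : Pi12Problem) (n₀ : ℕ) : Prop :=
  ∃ σ : List (Set stdM.carrier) → Prop × Set stdM.carrier,
    ∀ f, P2WinsRunWithin P Q stdM (fun _ => True) f (fun n => σ (histL stdM f n)) n₀

/-- `P ≤ω^n Q`: Player 2 wins `G(Q → P)` over `ω` in at most `n+1` moves. -/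
def leOmegaN (P Q : Pi12Problem) (n : ℕ) : Prop := P2HasWinStdWithin P Q (n+1)

/-- Weihrauch reducibility over `Γ` (relative to the universal Σ⁰₁ formula `θ`). -/
def WRed (Γ : Set Formula) (θ : Formula) (P Q : Pi12Problem) : Prop :=
  ∃ e i : ℕ, ∀ (M : L1Struc) (S : Set (Set M.carrier)),
    Countable M.carrier → Models2 M S Γ → D01Closed M S →
    ∀ X ∈ S, P.Inst M X →
      ∃ Xh : Set M.carrier, IsPhi θ M (numM M e) X Xh ∧ Q.Inst M Xh ∧
        ∀ Yh ∈ S, Q.Sol M Xh Yh →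
          ∃ Ys : Set M.carrier, IsPhi θ M (numM M i) (joinM M X Yh) Ys ∧ P.Sol M X Ys

/-! ### Runs played according to an arithmetic formula `Λ(X,n,e)` -/

/-- The run `(f,g)` is played by Player 2 according to `Λ`: at each alive stage `n`, Player 2
plays (the coded move of) `Φ_e^{X₀⊕⋯⊕Xₙ}` for some `e ∈ M` with
`M[X₀,…,Xₙ] ⊨ Λ(X₀⊕⋯⊕Xₙ, n, e)`. -/
def AccordsLambda (θ Λ : Formula) (P Q : Pi12Problem) (M : L1Struc)
    (C : List (Set M.carrier) → Prop) (f : ℕ → Set M.carrier)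
    (g : ℕ → Prop × Set M.carrier) : Prop :=
  ∀ n, Alive P Q M C f g n → ∃ (e : M.carrier) (Z : Set M.carrier),
    Λ.Sat M Set.univ (fun m => if m = 0 then numM M n else if m = 1 then e else M.zero)
      (fun _ => joinList M (histL M f n)) ∧
    IsPhi θ M e (joinList M (histL M f n)) Z ∧
    g n = ((M.zero ∈ Z), { a | M.add a M.one ∈ Z })

/-! ### Semantic rendering of the formulas `Θₙ` and `Δₙ` -/

/-- Satisfaction of the matrix `Θₙ`, given `X₀`, the current join `J`, the pairs
`(e_j, Y_j)` and the remaining `X_{j+1}, …`. -/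
def ThetaSat (θ : Formula) (P Q : Pi12Problem) (M : L1Struc) (X0 : Set M.carrier) :
    Set M.carrier → List (M.carrier × Set M.carrier) → List (Set M.carrier) → Prop
  | _, [], _ => True
  | J, [(e, Y)], _ => IsPhi θ M e J Y ∧ P.Sol M X0 Y
  | _, _ :: _ :: _, [] => True
  | J, (e, Y) :: eY' :: eYs, X :: Xs =>
      IsPhi θ M e J Y ∧ (P.Sol M X0 Y ∨ (Q.Inst M Y ∧ (Q.Sol M Y X →
        ThetaSat θ P Q M X0 (joinM M J X) (eY' :: eYs) Xs)))

def DeltaSatFin (θ : Formula) (P Q : Pi12Problem) (M : L1Struc)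
    (Xs : List (Set M.carrier)) (eYs : List (M.carrier × Set M.carrier)) : Prop :=
  match Xs with
  | [] => True
  | X0 :: rest => P.Inst M X0 → ThetaSat θ P Q M X0 X0 eYs rest

def DeltaSatAux (θ : Formula) (P Q : Pi12Problem) (M : L1Struc) (S : Set (Set M.carrier)) :
    ℕ → List (Set M.carrier) → List (M.carrier × Set M.carrier) → Prop
  | 0, Xs, eYs => DeltaSatFin θ P Q M Xs eYs
  | k+1, Xs, eYs => ∀ X ∈ S, ∃ e : M.carrier, ∃ Y ∈ S,
      DeltaSatAux θ P Q M S k (Xs ++ [X]) (eYs ++ [(e, Y)])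

/-- `(M,S) ⊨ Δₙ`, i.e. `∀X₀ ∃e₀,Y₀ ⋯ ∀Xₙ ∃eₙ,Yₙ Θₙ(…)`. -/
def DeltaSat (θ : Formula) (P Q : Pi12Problem) (M : L1Struc) (S : Set (Set M.carrier))
    (n : ℕ) : Prop :=
  DeltaSatAux θ P Q M S (n+1) [] []

/-! ### Concrete Π¹₂-problems -/

/-- The pairing term `π(t,s) = (t+s)·(t+s) + t`. -/
def pairT (t s : Term) : Term := .add (.mul (.add t s) (.add t s)) t

def Term.ofNat : ℕ → Term
  | 0 => .zero
  | n+1 => .add (Term.ofNat n) .one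

def trueF : Formula := .eq .zero .zero

def leF (t s : Term) : Formula := .or (.lt t s) (.eq t s)

/-- "The set variable `s` names an infinite set" (using number variables `a`, `b`). -/
def infiniteF (s a b : ℕ) : Formula :=
  .allN a (.exN b (.and (.lt (.var a) (.var b)) (.mem (.var b) s)))

/-- `LH`: instances are `c : [ℕ]² → 2` with `lim_y c(x,y) = 1` for all `x`
(coded as the set of codes `π(x,y)`, `x<y`, of pairs colored `1`); solutions are
infinite homogeneous sets. -/
def LH : Pi12Problem where
  theta := .allN 0 (.exN 1 (.allN 2 (.imp (.and (.lt (.var 0) (.var 2)) (.lt (.var 1) (.var 2)))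
    (.mem (pairT (.var 0) (.var 2)) 0))))
  psi := .and (infiniteF 1 0 1)
    (.or
      (.allN 0 (.allN 1 (.imp
        (.and (.mem (.var 0) 1) (.and (.mem (.var 1) 1) (.lt (.var 0) (.var 1))))
        (.mem (pairT (.var 0) (.var 1)) 0))))
      (.allN 0 (.allN 1 (.imp
        (.and (.mem (.var 0) 1) (.and (.mem (.var 1) 1) (.lt (.var 0) (.var 1))))
        (.not (.mem (pairT (.var 0) (.var 1)) 0))))))

/-- `Bound*`: an instance is a simultaneous enumeration of a finite family `F₀,…,F_k` of
bounded sets (marker `π(0,k)`; entries `π(i+1, π(n,s))` meaning `n` enters `F_i` at stage `s`);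
a solution is (the singleton of) a common bound. -/
def BoundStar : Pi12Problem where
  theta := .exN 0 (.and (.mem (pairT .zero (.var 0)) 0)
    (.and (.allN 1 (.imp (.mem (pairT .zero (.var 1)) 0) (.eq (.var 1) (.var 0))))
      (.and (.allN 1 (.imp (.mem (.var 1) 0)
          (.or (.exN 2 (.eq (.var 1) (pairT .zero (.var 2))))
               (.exN 2 (.and (leF (.var 2) (.var 0))
                 (.exN 3 (.exN 4 (.eq (.var 1)
                   (pairT (.add (.var 2) .one) (pairT (.var 3) (.var 4)))))))))))
        (.allN 1 (.imp (leF (.var 1) (.var 0))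
          (.exN 2 (.allN 3 (.allN 4 (.imp
            (.mem (pairT (.add (.var 1) .one) (pairT (.var 3) (.var 4))) 0)
            (leF (.var 3) (.var 2)))))))))))
  psi := .exN 0 (.and (.mem (.var 0) 1)
    (.and (.allN 1 (.imp (.mem (.var 1) 1) (.eq (.var 1) (.var 0))))
      (.allN 1 (.allN 2 (.allN 3 (.imp
        (.mem (pairT (.add (.var 1) .one) (pairT (.var 2) (.var 3))) 0)
        (leF (.var 2) (.var 0))))))))

/-- `stBound*`: an instance is an enumeration of a set `X ⊆ ℕ×ℕ` (entries `π(π(n,k),s)`)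
such that `{n : ∃k (n,k) ∈ X}` is bounded and each `{k : (n,k) ∈ X}` is bounded; a solution
is (the singleton of) a bound on `{k : ∃n (n,k) ∈ X}`. -/
def stBoundStar : Pi12Problem where
  theta := .and (.allN 0 (.imp (.mem (.var 0) 0)
        (.exN 1 (.exN 2 (.exN 3 (.eq (.var 0) (pairT (pairT (.var 1) (.var 2)) (.var 3))))))))
    (.and (.exN 0 (.allN 1 (.allN 2 (.allN 3 (.imp
        (.mem (pairT (pairT (.var 1) (.var 2)) (.var 3)) 0) (leF (.var 1) (.var 0)))))))
      (.allN 1 (.exN 0 (.allN 2 (.allN 3 (.imp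
        (.mem (pairT (pairT (.var 1) (.var 2)) (.var 3)) 0) (leF (.var 2) (.var 0))))))))
  psi := .exN 0 (.and (.mem (.var 0) 1)
    (.and (.allN 1 (.imp (.mem (.var 1) 1) (.eq (.var 1) (.var 0))))
      (.allN 1 (.allN 2 (.allN 3 (.imp
        (.mem (pairT (pairT (.var 1) (.var 2)) (.var 3)) 0)
        (leF (.var 2) (.var 0))))))))

/-- `stRT¹_{<∞}`: instances are functions `c : ℕ → ℕ` with bounded range (coded as sets of
codes `π(x, c(x))`); solutions are infinite sets on which `c` is constant. -/
def stRT1inf : Pi12Problem where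
  theta := .and (.allN 0 (.exN 1 (.and (.mem (pairT (.var 0) (.var 1)) 0)
        (.allN 2 (.imp (.mem (pairT (.var 0) (.var 2)) 0) (.eq (.var 2) (.var 1)))))))
    (.exN 1 (.allN 0 (.allN 2 (.imp (.mem (pairT (.var 0) (.var 2)) 0) (leF (.var 2) (.var 1))))))
  psi := .and (infiniteF 1 0 1)
    (.exN 0 (.allN 1 (.imp (.mem (.var 1) 1) (.mem (pairT (.var 1) (.var 0)) 0))))

/-- `C_ℕ`: an instance is an enumeration of the complement of a nonempty set `A`
(entries `π(n,s)` meaning `n` is enumerated out at stage `s`); a solution is (the singleton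
of) an element of `A`. -/
def CN : Pi12Problem where
  theta := .exN 0 (.allN 1 (.not (.mem (pairT (.var 0) (.var 1)) 0)))
  psi := .exN 0 (.and (.mem (.var 0) 1)
    (.and (.allN 1 (.imp (.mem (.var 1) 1) (.eq (.var 1) (.var 0))))
      (.allN 1 (.not (.mem (pairT (.var 0) (.var 1)) 0)))))

/-- The code `π(x_i, π(x_{i+1}, …, x_{i+c-1}))` of the tuple of variables `i, …, i+c-1`. -/
def varsCode : ℕ → ℕ → Term
  | _, 0 => .zero
  | i, 1 => .var i
  | i, c+2 => pairT (.var i) (varsCode (i+1) (c+1))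

/-- `x_i < x_{i+1} < ⋯ < x_{i+c-1}`. -/
def chainLt : ℕ → ℕ → Formula
  | _, 0 => trueF
  | _, 1 => trueF
  | i, c+2 => .and (.lt (.var i) (.var (i+1))) (chainLt (i+1) (c+1))

/-- `x_i ∈ s ∧ ⋯ ∧ x_{i+c-1} ∈ s` (for the set variable `s`). -/
def allMemS (s : ℕ) : ℕ → ℕ → Formula
  | _, 0 => trueF
  | i, c+1 => .and (.mem (.var i) s) (allMemS s (i+1) c)

/-- `∀ x_i ⋯ ∀ x_{i+c-1} φ`. -/
def allNs : ℕ → ℕ → Formula → Formula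
  | _, 0, φ => φ
  | i, c+1, φ => .allN i (allNs (i+1) c φ)

/-- `RTⁿ_k`: instances are colorings `c : [ℕ]ⁿ → k` (coded as sets of codes
`π(⟨x₁,…,xₙ⟩, v)` for `x₁<⋯<xₙ` and `v = c(x₁,…,xₙ) < k`); solutions are infinite
homogeneous sets. -/
def RTn (n k : ℕ) : Pi12Problem where
  theta := allNs 1 n (.imp (chainLt 1 n)
    (.exN 0 (.and (.lt (.var 0) (Term.ofNat k))
      (.and (.mem (pairT (varsCode 1 n) (.var 0)) 0)
        (.allN (n+1) (.imp (.mem (pairT (varsCode 1 n) (.var (n+1))) 0)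
          (.eq (.var (n+1)) (.var 0))))))))
  psi := .and (infiniteF 1 (n+1) (n+2))
    (.exN 0 (.and (.lt (.var 0) (Term.ofNat k))
      (allNs 1 n (.imp (.and (chainLt 1 n) (allMemS 1 1 n))
        (.mem (pairT (varsCode 1 n) (.var 0)) 0)))))

/-- `RTⁿ_{<∞}`: the number of colors is part of the instance (marker `π(0,k)`, entries
`π(1, π(⟨x₁,…,xₙ⟩, v))`). -/
def RTnInf (n : ℕ) : Pi12Problem where
  theta := .exN 0 (.and (.mem (pairT .zero (.var 0)) 0)
    (.and (.allN (n+1) (.imp (.mem (pairT .zero (.var (n+1))) 0) (.eq (.var (n+1)) (.var 0))))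
      (allNs 1 n (.imp (chainLt 1 n)
        (.exN (n+1) (.and (.lt (.var (n+1)) (.var 0))
          (.and (.mem (pairT .one (pairT (varsCode 1 n) (.var (n+1)))) 0)
            (.allN (n+2) (.imp (.mem (pairT .one (pairT (varsCode 1 n) (.var (n+2)))) 0)
              (.eq (.var (n+2)) (.var (n+1))))))))))))
  psi := .and (infiniteF 1 (n+1) (n+2))
    (.exN (n+1) (allNs 1 n (.imp (.and (chainLt 1 n) (allMemS 1 1 n))
      (.mem (pairT .one (pairT (varsCode 1 n) (.var (n+1)))) 0))))

/-! ### Material for Uftring's example (Statement 11) -/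

/-- `G` is (an arithmetization of) a primitive recursive predicate: a Σ⁰₁ formula in the
number variable `0`, `RCA₀`-provably equivalent to a Π⁰₁ formula, whose standard
extension is primitive recursive. -/
def PrimRecPred (G : Formula) : Prop :=
  IsSigma01 G ∧ G.numFV ⊆ {0} ∧ G.setFV = ∅ ∧
  (∃ π : Formula, IsPi01 π ∧ π.numFV ⊆ {0} ∧ π.setFV = ∅ ∧
      Proves RCA0 (Formula.iff G π)) ∧
  (∃ f : ℕ → Bool, Nat.Primrec (fun m => (f m).toNat) ∧
      ∀ m : ℕ, f m = true ↔
        G.Sat stdM Set.univ (fun i => if i = 0 then m else 0) (fun _ => (∅ : Set ℕ)))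

/-- Truth of `G(m)` in the standard model. -/
def satStd1 (G : Formula) (m : ℕ) : Prop :=
  G.Sat stdM Set.univ (fun i => if i = 0 then m else 0) (fun _ => (∅ : Set ℕ))

/-- The problem `P ≡ ∀X ∃Y ∀x G(x)`. -/
def PGprob (G : Formula) : Pi12Problem where
  theta := trueF
  psi := .allN 0 G

/-- The problem `Q ≡ ∀X [X ≠ ∅ → ∃Y G(μX)]`. -/
def QGprob (G : Formula) : Pi12Problem where
  theta := .exN 0 (.mem (.var 0) 0)
  psi := .exN 0 (.and (.mem (.var 0) 0)
    (.and (.allN 1 (.imp (.lt (.var 1) (.var 0)) (.not (.mem (.var 1) 0)))) G))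

/-! ### Material for Statement 13 -/

/-- A model of a sentence (all valuations into `S`). -/
def ModelsSent (M : L1Struc) (S : Set (Set M.carrier)) (φ : Formula) : Prop :=
  ∀ (v : ℕ → M.carrier) (V : ℕ → Set M.carrier), (∀ i, V i ∈ S) → φ.Sat M S v V

/-- The pairing function inside `M`. -/
def pairM (M : L1Struc) (x y : M.carrier) : M.carrier :=
  M.add (M.mul (M.add x y) (M.add x y)) x

/-- `j : ℕ → M` is an embedding of the standard model into `M`. -/
def L1Embed (M : L1Struc) (j : ℕ → M.carrier) : Prop :=
  j 0 = M.zero ∧ j 1 = M.one ∧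
  (∀ a b : ℕ, j (a + b) = M.add (j a) (j b)) ∧
  (∀ a b : ℕ, j (a * b) = M.mul (j a) (j b)) ∧
  (∀ a b : ℕ, a < b ↔ M.lt (j a) (j b)) ∧
  Function.Injective j

/-- `M` and the embedded standard model satisfy the same existential `L₁`-sentences with
parameters from `ℕ`. -/
def OneElementaryOverStd (M : L1Struc) (j : ℕ → M.carrier) : Prop :=
  ∀ φ, IsExistentialL1 φ → ∀ v : ℕ → ℕ,
    (φ.Sat stdM Set.univ v (fun _ => (∅ : Set ℕ)) ↔
     φ.Sat M Set.univ (fun i => j (v i)) (fun _ => (∅ : Set M.carrier)))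

/-- `A` is `M`-finite: Δ⁰₁-definable over `M` (without set parameters) and bounded. -/
def MFinite (M : L1Struc) (A : Set M.carrier) : Prop :=
  A ∈ Mcl M (∅ : Set (Set M.carrier)) ∧ ∃ b, ∀ x ∈ A, M.lt x b

/-- A total coloring (coded as the set `X` of codes of pairs colored `1`) extends the
condition `(m, p)` of the forcing notion `P_M`: it agrees with `p` below `m`, and colors
`(x,y)` with `1` whenever `x < m ≤ y`. -/
def ExtendsCond (M : L1Struc) (m : M.carrier) (p : Set M.carrier) (X : Set M.carrier) : Prop :=
  (∀ x y, M.lt x y → M.lt y m → (pairM M x y ∈ X ↔ pairM M x y ∈ p)) ∧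
  (∀ x y, M.lt x m → ¬ M.lt y m → M.lt x y → pairM M x y ∈ X)

end SOA

/-!
Side conditions on Player 1 only matter at finitely many stages of a run. A model `(M, S)` of
`Γ` closed under Δ⁰₁-comprehension makes every position legal in `Ĝ^Γ` legal in `G^Γ`, and a
position consistent with `Γ` lies in such a model; this gives (1) ⇒ (2), (3) ⇔ (4) with the
same `n`, and trivially (3) ⇒ (1).

The real content is (2) ⇒ (4), a compactness argument. If the code wins `Ĝ^Γ(Q → P)`, but for
every `n` some countable model carries a run following the code that is still alive at stage
`n`, take the ultraproduct of these models over a nonprincipal ultrafilter, cut down to the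
Skolem hull of countably many sequences so that it stays countable. By Łoś's theorem it is a
model of `Γ`, and the coordinatewise limit of the runs is a run in it that follows the code
(the index `e = Φ_k(n)` is the same in every run reaching stage `n`) and never ends.
-/

namespace SOA

/-! ### Satisfaction -/

theorem Term.fv_finite : ∀ t : Term, t.fv.Finite
  | .var _ => Set.finite_singleton _
  | .zero | .one => Set.finite_empty
  | .add t s | .mul t s => (Term.fv_finite t).union (Term.fv_finite s)

theorem Formula.numFV_finite : ∀ φ : Formula, φ.numFV.Finite
  | .eq t s | .lt t s => (Term.fv_finite t).union (Term.fv_finite s)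
  | .mem t _ => Term.fv_finite t
  | .not φ | .allS _ φ | .exS _ φ => Formula.numFV_finite φ
  | .and φ ψ | .or φ ψ | .imp φ ψ => (Formula.numFV_finite φ).union (Formula.numFV_finite ψ)
  | .allN _ φ | .exN _ φ => (Formula.numFV_finite φ).sdiff

theorem Formula.setFV_finite : ∀ φ : Formula, φ.setFV.Finite
  | .eq _ _ | .lt _ _ => Set.finite_empty
  | .mem _ _ => Set.finite_singleton _
  | .not φ | .allN _ φ | .exN _ φ => Formula.setFV_finite φ
  | .and φ ψ | .or φ ψ | .imp φ ψ => (Formula.setFV_finite φ).union (Formula.setFV_finite ψ)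
  | .allS _ φ | .exS _ φ => (Formula.setFV_finite φ).sdiff

theorem Formula.exists_bound_fv (φ : Formula) : ∃ n, ∀ i ∈ φ.numFV ∪ φ.setFV, i < n := by
  obtain ⟨b, hb⟩ := ((Formula.numFV_finite φ).union (Formula.setFV_finite φ)).bddAbove
  exact ⟨b + 1, fun i hi => Nat.lt_succ_of_le (hb hi)⟩

theorem eqOn_update_of_eqOn_sdiff {β : Type*} {v v' : ℕ → β} {s : Set ℕ} {x : ℕ}
    (h : Set.EqOn v v' (s \ {x})) (a : β) :
    Set.EqOn (Function.update v x a) (Function.update v' x a) s := by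
  intro i hi
  rcases eq_or_ne i x with rfl | hne
  · simp
  · simpa [Function.update_of_ne hne] using h ⟨hi, hne⟩

theorem eqOn_update {β : Type*} {v v' : ℕ → β} {s : Set ℕ} (h : Set.EqOn v v' s)
    (x : ℕ) (a : β) : Set.EqOn (Function.update v x a) (Function.update v' x a) s :=
  eqOn_update_of_eqOn_sdiff (h.mono Set.sdiff_subset) a

theorem Term.val_congr {M : L1Struc} {v v' : ℕ → M.carrier} {t : Term}
    (h : Set.EqOn v v' t.fv) : t.val M v = t.val M v' := by
  induction t with
  | var i => exact h rfl
  | zero | one => rfl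
  | add t s iht ihs | mul t s iht ihs =>
    rw [Term.fv, Set.eqOn_union] at h
    simp only [Term.val, iht h.1, ihs h.2]

theorem Formula.sat_congr {M : L1Struc} {D : Set (Set M.carrier)} {φ : Formula}
    {v v' : ℕ → M.carrier} {V V' : ℕ → Set M.carrier}
    (hv : Set.EqOn v v' φ.numFV) (hV : Set.EqOn V V' φ.setFV) :
    φ.Sat M D v V ↔ φ.Sat M D v' V' := by
  induction φ generalizing v v' V V' with
  | eq t s | lt t s =>
    rw [Formula.numFV, Set.eqOn_union] at hv
    simp only [Formula.Sat, Term.val_congr hv.1, Term.val_congr hv.2]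
  | mem t X => simp only [Formula.Sat, Term.val_congr hv, hV rfl]
  | not φ ih => simp only [Formula.Sat, ih hv hV]
  | and φ ψ ihφ ihψ | or φ ψ ihφ ihψ | imp φ ψ ihφ ihψ =>
    rw [Formula.numFV, Set.eqOn_union] at hv
    rw [Formula.setFV, Set.eqOn_union] at hV
    simp only [Formula.Sat, ihφ hv.1 hV.1, ihψ hv.2 hV.2]
  | allN x φ ih | exN x φ ih =>
    simp only [Formula.Sat, ih (eqOn_update_of_eqOn_sdiff hv _) hV]
  | allS X φ ih | exS X φ ih =>
    simp only [Formula.Sat, ih hv (eqOn_update_of_eqOn_sdiff hV _)]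

theorem Formula.IsArithmetic.sat_iff {M : L1Struc} {D D' : Set (Set M.carrier)} {φ : Formula}
    (hφ : φ.IsArithmetic) {v : ℕ → M.carrier} {V : ℕ → Set M.carrier} :
    φ.Sat M D v V ↔ φ.Sat M D' v V := by
  induction φ generalizing v with
  | eq | lt | mem => rfl
  | not φ ih => simp only [Formula.Sat, ih hφ]
  | and φ ψ ihφ ihψ | or φ ψ ihφ ihψ | imp φ ψ ihφ ihψ =>
    simp only [Formula.Sat, ihφ hφ.1, ihψ hφ.2]
  | allN x φ ih | exN x φ ih => simp only [Formula.Sat, ih hφ]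
  | allS | exS => exact hφ.elim

theorem IsDelta0.isArithmetic {φ : Formula} (h : IsDelta0 φ) : φ.IsArithmetic := by
  induction h with
  | eq | lt | mem => trivial
  | not _ ih => exact ih
  | and _ _ ih₁ ih₂ | or _ _ ih₁ ih₂ | imp _ _ ih₁ ih₂ => exact ⟨ih₁, ih₂⟩
  | ballLt _ _ _ _ ih | bexLt _ _ _ _ ih => exact ⟨trivial, ih⟩

theorem IsSigma01.isArithmetic {φ : Formula} (h : IsSigma01 φ) : φ.IsArithmetic := by
  induction h with
  | delta0 h => exact h.isArithmetic
  | exN _ _ ih => exact ih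

def Term.code : Term → ℕ
  | .var i => Nat.pair 0 i
  | .zero => Nat.pair 1 0
  | .one => Nat.pair 2 0
  | .add t s => Nat.pair 3 (Nat.pair t.code s.code)
  | .mul t s => Nat.pair 4 (Nat.pair t.code s.code)

theorem Term.code_injective : Function.Injective Term.code := by
  intro t s h
  induction t generalizing s <;> cases s <;> simp only [Term.code, Nat.pair_eq_pair] at h <;> aesop

instance : Countable Term := Term.code_injective.countable

def Formula.code : Formula → ℕ
  | .eq t s => Nat.pair 0 (Nat.pair t.code s.code)
  | .lt t s => Nat.pair 1 (Nat.pair t.code s.code)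
  | .mem t X => Nat.pair 2 (Nat.pair t.code X)
  | .not φ => Nat.pair 3 φ.code
  | .and φ ψ => Nat.pair 4 (Nat.pair φ.code ψ.code)
  | .or φ ψ => Nat.pair 5 (Nat.pair φ.code ψ.code)
  | .imp φ ψ => Nat.pair 6 (Nat.pair φ.code ψ.code)
  | .allN x φ => Nat.pair 7 (Nat.pair x φ.code)
  | .exN x φ => Nat.pair 8 (Nat.pair x φ.code)
  | .allS X φ => Nat.pair 9 (Nat.pair X φ.code)
  | .exS X φ => Nat.pair 10 (Nat.pair X φ.code)

theorem Formula.code_injective : Function.Injective Formula.code := by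
  intro φ ψ h
  induction φ generalizing ψ <;> cases ψ <;>
    simp only [Formula.code, Nat.pair_eq_pair, Term.code_injective.eq_iff] at h <;> aesop

instance : Countable Formula := Formula.code_injective.countable

/-! ### Δ⁰₁-comprehension -/

theorem Delta1Def.mono {M : L1Struc} {Ps Ps' : Set (Set M.carrier)} {X : Set M.carrier}
    (h : Delta1Def M Ps X) (hsub : Ps ⊆ Ps') : Delta1Def M Ps' X := by
  obtain ⟨φ₀, φ₁, x, v, V, h0, h1, hV, hc, hX⟩ := h
  exact ⟨φ₀, φ₁, x, v, V, h0, h1, fun i hi => hsub (hV i hi), hc, hX⟩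

theorem mem_board_of_mem {M : L1Struc} {hist : List (Set M.carrier)} {X : Set M.carrier}
    (hX : X ∈ hist) : X ∈ Board M hist := by
  refine ⟨.mem (.var 0) 0, .not (.mem (.var 0) 0), 0, fun _ => M.zero, fun _ => X,
    .delta0 (.mem _ _), .delta0 (.not (.mem _ _)), ?_, fun a => ?_, ?_⟩
  · simpa [Formula.setFV] using hX
  · simp [Formula.Sat, Term.val]
  · ext a
    simp [Formula.Sat, Term.val]

theorem D01Closed.board_subset {M : L1Struc} {S : Set (Set M.carrier)}
    {hist : List (Set M.carrier)} (hcl : D01Closed M S) (hh : ∀ X ∈ hist, X ∈ S) :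
    Board M hist ⊆ S :=
  fun X hX => hcl X (hX.mono hh)

theorem D01Closed.empty_mem {M : L1Struc} {S : Set (Set M.carrier)} (h : D01Closed M S) :
    (∅ : Set M.carrier) ∈ S := by
  refine h ∅ ⟨.not (.eq .zero .zero), .eq .zero .zero, 0, fun _ => M.zero, fun _ => ∅,
    .delta0 (.not (.eq _ _)), .delta0 (.eq _ _), ?_, fun a => ?_, ?_⟩
  · simp [Formula.setFV]
  · simp [Formula.Sat]
  · ext a
    simp [Formula.Sat]

theorem Models2.delta01_comprehension {M : L1Struc} {S : Set (Set M.carrier)} {Γ : Set Formula}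
    (hmod : Models2 M S Γ) (hΓ : Delta01CA ⊆ Γ)
    {φ₀ φ₁ : Formula} (h0 : IsSigma01 φ₀) (h1 : IsSigma01 φ₁) (x : ℕ)
    (v : ℕ → M.carrier) (V : ℕ → Set M.carrier) (hV : ∀ i, V i ∈ S)
    (hcompl : ∀ a, φ₀.Sat M Set.univ (Function.update v x a) V ↔
      ¬ φ₁.Sat M Set.univ (Function.update v x a) V) :
    {a | φ₀.Sat M Set.univ (Function.update v x a) V} ∈ S := by
  obtain ⟨X, hX⟩ : ∃ X, X ∉ φ₀.setFV ∪ φ₁.setFV :=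
    ((Formula.setFV_finite φ₀).union (Formula.setFV_finite φ₁)).infinite_compl.nonempty
  have hax := hmod _ (hΓ ⟨φ₀, φ₁, x, X, h0, h1, fun h => hX (Or.inl h),
    fun h => hX (Or.inr h), rfl⟩) v V hV
  simp only [Formula.Sat, Formula.iff, Term.val, Function.update_self] at hax
  obtain ⟨A, hA, hAx⟩ := hax fun a =>
    ⟨fun h h' => (hcompl a).1 (h0.isArithmetic.sat_iff.1 h) (h1.isArithmetic.sat_iff.1 h'),
      fun h => h0.isArithmetic.sat_iff.2 ((hcompl a).2 fun h' => h (h1.isArithmetic.sat_iff.1 h'))⟩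
  convert hA using 1
  ext a
  have hupd : Set.EqOn (Function.update V X A) V φ₀.setFV := fun i hi =>
    Function.update_of_ne (by rintro rfl; exact hX (Or.inl hi)) _ _
  rw [Set.mem_ofPred_eq, ← h0.isArithmetic.sat_iff (D := S),
    ← Formula.sat_congr (fun _ _ => rfl) hupd]
  exact ⟨(hAx a).2, (hAx a).1⟩

theorem Models2.d01Closed {M : L1Struc} {S : Set (Set M.carrier)} {Γ : Set Formula}
    (hmod : Models2 M S Γ) (hΓ : Delta01CA ⊆ Γ) (hne : S.Nonempty) : D01Closed M S := by
  classical
  obtain ⟨A₀, hA₀⟩ := hne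
  rintro X ⟨φ₀, φ₁, x, v, V, h0, h1, hVS, hcompl, rfl⟩
  set V' : ℕ → Set M.carrier := fun i => if i ∈ φ₀.setFV ∪ φ₁.setFV then V i else A₀
  have hV' : ∀ i, V' i ∈ S := fun i => by
    dsimp only [V']
    split_ifs with h
    exacts [hVS i h, hA₀]
  have hagree : ∀ {φ : Formula}, φ.setFV ⊆ φ₀.setFV ∪ φ₁.setFV → ∀ a,
      φ.Sat M Set.univ (Function.update v x a) V' ↔ φ.Sat M Set.univ (Function.update v x a) V :=
    fun hsub a => Formula.sat_congr (fun _ _ => rfl) fun i hi => if_pos (hsub hi)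
  convert hmod.delta01_comprehension hΓ h0 h1 x v V' hV' (fun a => by
    rw [hagree Set.subset_union_left, hagree Set.subset_union_right]; exact hcompl a) using 1
  ext a
  exact (hagree Set.subset_union_left a).symm

/-! ### Runs and computable strategies -/

section Runs

variable {P Q : Pi12Problem} {M : L1Struc} {C C' : List (Set M.carrier) → Prop}
  {f : ℕ → Set M.carrier} {g g' : ℕ → Prop × Set M.carrier}

theorem mem_histL {n : ℕ} {X : Set M.carrier} : X ∈ histL M f n ↔ ∃ j ≤ n, f j = X := by
  simp [histL]

theorem histL_length (n : ℕ) : (histL M f n).length = n + 1 := by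
  simp [histL]

theorem joinList_append_singleton {l : List (Set M.carrier)} (hl : l ≠ []) (X : Set M.carrier) :
    joinList M (l ++ [X]) = joinM M (joinList M l) X := by
  obtain ⟨Y, l, rfl⟩ := List.exists_cons_of_ne_nil hl
  simp [joinList]

theorem joinList_histL_succ (n : ℕ) :
    joinList M (histL M f (n + 1)) = joinM M (joinList M (histL M f n)) (f (n + 1)) := by
  rw [← joinList_append_singleton (by simp [histL])]
  simp [histL, List.range_succ]

theorem Alive.of_le {n : ℕ} (h : Alive P Q M C f g n) {m : ℕ} (hm : m ≤ n) :
    Alive P Q M C f g m := by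
  induction n with
  | zero => rwa [Nat.le_zero.1 hm]
  | succ n ih =>
    rcases hm.eq_or_lt with rfl | hlt
    · exact h
    · exact ih h.1 (Nat.lt_succ_iff.1 hlt)

theorem Alive.cond : ∀ {n : ℕ}, Alive P Q M C f g n → C (histL M f n)
  | 0, h => h.2
  | _ + 1, h => h.2.2.2.2.2

theorem Alive.withCond : ∀ {n : ℕ}, Alive P Q M C f g n → (∀ m ≤ n, C' (histL M f m)) →
    Alive P Q M C' f g n
  | 0, h, hC => ⟨h.1, hC 0 le_rfl⟩
  | n + 1, h, hC => ⟨h.1.withCond fun m hm => hC m (hm.trans n.le_succ), h.2.1, h.2.2.1,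
      h.2.2.2.1, h.2.2.2.2.1, hC (n + 1) le_rfl⟩

theorem alive_congr : ∀ {n : ℕ}, (∀ m < n, g m = g' m) →
    (Alive P Q M C f g n ↔ Alive P Q M C f g' n)
  | 0, _ => Iff.rfl
  | n + 1, hg => by
    simp only [Alive, alive_congr fun m hm => hg m (hm.trans n.lt_succ_self), hg n n.lt_succ_self]

end Runs

section CodeStrategies

variable {θ : Formula} {k : Nat.Partrec.Code} {P Q : Pi12Problem} {M : L1Struc}
  {C C' : List (Set M.carrier) → Prop} {f : ℕ → Set M.carrier} {g : ℕ → Prop × Set M.carrier}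

theorem exists_followsCode_extension {t : ℕ}
    (htot : ∀ g n, (∀ m < n, Alive P Q M C f g m → CodeMove θ M k (histL M f m) (g m)) →
      Alive P Q M C f g n → ∃ mv, CodeMove θ M k (histL M f n) mv)
    (hg : ∀ m < t, CodeMove θ M k (histL M f m) (g m)) :
    ∃ g' : ℕ → Prop × Set M.carrier, (∀ m < t, g' m = g m) ∧
      ∀ n, Alive P Q M C f g' n → CodeMove θ M k (histL M f n) (g' n) := by
  classical
  let g' : ℕ → Prop × Set M.carrier := fun m =>
    if m < t then g m
    else if h : ∃ mv, CodeMove θ M k (histL M f m) mv then h.choose else g m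
  refine ⟨g', fun m hm => if_pos hm, fun n => ?_⟩
  induction n using Nat.strong_induction_on with
  | _ n ih =>
    intro hal
    by_cases hn : n < t
    · simpa only [g', if_pos hn] using hg n hn
    · have hex := htot g' n (fun m hm ham => ih m hm ham) hal
      simpa only [g', if_neg hn, dif_pos hex] using hex.choose_spec

theorem P2CompWinsC.legal (hk : P2CompWinsC θ k P Q M C) {n : ℕ}
    (hcf : ∀ m ≤ n, CodeMove θ M k (histL M f m) (g m)) (hal : Alive P Q M C f g n) :
    P2ContMove Q M f g n ∨ P2WinMove P M f g n := by
  obtain ⟨g', hg', hcf'⟩ := exists_followsCode_extension (t := n + 1) (fun g => (hk f g).1)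
    fun m hm => hcf m (Nat.lt_succ_iff.1 hm)
  have hal' := (alive_congr fun m hm => (hg' m (hm.trans n.lt_succ_self)).symm).1 hal
  simpa only [P2ContMove, P2WinMove, hg' n n.lt_succ_self] using ((hk f g').2 hcf').1 n hal'

theorem P2CompWinsCWithin.toC {n₀ : ℕ} (hk : P2CompWinsCWithin θ k P Q M C n₀) :
    P2CompWinsC θ k P Q M C := fun f g =>
  ⟨(hk f g).1, fun hcf => ⟨((hk f g).2 hcf).1, fun hall => ((hk f g).2 hcf).2 (hall n₀)⟩⟩

theorem P2CompWinsCWithin.not_alive {n₀ : ℕ} (hk : P2CompWinsCWithin θ k P Q M C n₀)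
    (hcf : ∀ m ≤ n₀, CodeMove θ M k (histL M f m) (g m)) : ¬ Alive P Q M C f g n₀ := by
  obtain ⟨g', hg', hcf'⟩ := exists_followsCode_extension (t := n₀ + 1) (fun g => (hk f g).1)
    fun m hm => hcf m (Nat.lt_succ_iff.1 hm)
  rw [alive_congr fun m hm => (hg' m (hm.trans n₀.lt_succ_self)).symm]
  exact ((hk f g').2 hcf').2

theorem P2CompWinsC.mono_cond (hk : P2CompWinsC θ k P Q M C) (hC : ∀ h, C' h → C h) :
    P2CompWinsC θ k P Q M C' := by
  have hal_C : ∀ {f g n}, Alive P Q M C' f g n → Alive P Q M C f g n :=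
    fun hal => hal.withCond fun _ hm => hC _ (hal.of_le hm).cond
  refine fun f g => ⟨fun n hprev hal => ?_, fun hcf => ⟨fun n hal => ?_, fun hall => ?_⟩⟩
  · exact (hk f g).1 n (fun m hm _ => hprev m hm (hal.of_le hm.le)) (hal_C hal)
  · exact hk.legal (fun m hm => hcf m (hal.of_le hm)) (hal_C hal)
  · exact ((hk f g).2 fun n _ => hcf n (hall n)).2 fun n => hal_C (hall n)

/-- Winning within `n₀` moves only concerns finite stages of a run, so the side condition may
be traded position by position. -/
theorem P2CompWinsCWithin.of_local {n₀ : ℕ}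
    (h : ∀ f g n, Alive P Q M C' f g n →
      ∃ C, P2CompWinsCWithin θ k P Q M C n₀ ∧ ∀ m ≤ n, C (histL M f m)) :
    P2CompWinsCWithin θ k P Q M C' n₀ := by
  refine fun f g => ⟨fun n hprev hal => ?_, fun hcf => ⟨fun n hal => ?_, fun hal => ?_⟩⟩
  · obtain ⟨C, hk, hC⟩ := h f g n hal
    exact (hk f g).1 n (fun m hm _ => hprev m hm (hal.of_le hm.le)) (hal.withCond hC)
  · obtain ⟨C, hk, hC⟩ := h f g n hal
    exact hk.toC.legal (fun m hm => hcf m (hal.of_le hm)) (hal.withCond hC)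
  · obtain ⟨C, hk, hC⟩ := h f g n₀ hal
    exact hk.not_alive (fun m hm => hcf m (hal.of_le hm)) (hal.withCond hC)

/-- The move `mv` decodes `Φ_e^J`, where `e = ⟨i, j⟩` and `i`, `j` index complementary
instances of the universal formula `θ`. -/
def IsDecodedPhi (θ : Formula) (M : L1Struc) (e : ℕ) (i j : M.carrier) (J : Set M.carrier)
    (mv : Prop × Set M.carrier) : Prop :=
  cantorPairRel M i j (numM M e) ∧ (∀ m, satIdx θ M i m J ↔ ¬ satIdx θ M j m J) ∧
    mv = (satIdx θ M i M.zero J, {a | satIdx θ M i (M.add a M.one) J})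

theorem codeMove_iff {θ : Formula} {M : L1Struc} {k : Nat.Partrec.Code}
    {hist : List (Set M.carrier)} {mv : Prop × Set M.carrier} :
    CodeMove θ M k hist mv ↔
      ∃ e ∈ k.eval (hist.length - 1), ∃ i j, IsDecodedPhi θ M e i j (joinList M hist) mv := by
  constructor
  · rintro ⟨e, he, Z, ⟨i, j, hpair, hcompl, hZ⟩, rfl⟩
    obtain rfl : Z = {x | satIdx θ M i x (joinList M hist)} := Set.ext hZ
    exact ⟨e, he, i, j, hpair, hcompl, rfl⟩
  · rintro ⟨e, he, i, j, hpair, hcompl, rfl⟩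
    exact ⟨e, he, _, ⟨i, j, hpair, hcompl, fun _ => Iff.rfl⟩, rfl⟩

end CodeStrategies

section SoftImplications

variable {Γ : Set Formula} {θ : Formula} {P Q : Pi12Problem}

theorem condG_of_condS {M : L1Struc} {S : Set (Set M.carrier)} {hist : List (Set M.carrier)}
    (hmod : Models2 M S Γ) (hcl : D01Closed M S) (hh : CondS M S hist) : CondG Γ M hist :=
  ⟨S, hcl.board_subset hh, hmod⟩

theorem P2CompWinsG.p2CompWinsHat : P2CompWinsG Γ θ P Q → P2CompWinsHat Γ θ P Q :=
  fun ⟨k, hk⟩ => ⟨k, fun _ _ hcnt hmod hcl =>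
    (hk _ hcnt).mono_cond fun _ => condG_of_condS hmod hcl⟩

theorem P2CompWinsGWithin.p2CompWinsG {n₀ : ℕ} :
    P2CompWinsGWithin Γ θ P Q n₀ → P2CompWinsG Γ θ P Q :=
  fun ⟨k, hk⟩ => ⟨k, fun M hcnt => (hk M hcnt).toC⟩

theorem P2CompWinsGWithin.p2CompWinsHatWithin {n₀ : ℕ} :
    P2CompWinsGWithin Γ θ P Q n₀ → P2CompWinsHatWithin Γ θ P Q n₀ :=
  fun ⟨k, hk⟩ => ⟨k, fun M _ hcnt hmod hcl => P2CompWinsCWithin.of_local fun _ _ _ hal =>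
    ⟨_, hk M hcnt, fun _ hm => condG_of_condS hmod hcl (hal.of_le hm).cond⟩⟩

/-- A position consistent with `Γ` lies in a model `T` of `Γ`, which is closed under
Δ⁰₁-comprehension, so the code's win over `(M, T)` applies to it. -/
theorem P2CompWinsHatWithin.p2CompWinsGWithin (hExt : Delta01CA ⊆ Γ) {n₀ : ℕ} :
    P2CompWinsHatWithin Γ θ P Q n₀ → P2CompWinsGWithin Γ θ P Q n₀ := by
  refine fun ⟨k, hk⟩ => ⟨k, fun M hcnt => P2CompWinsCWithin.of_local fun f g n hal => ?_⟩
  obtain ⟨T, hT, hmodT⟩ := hal.cond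
  have hboard : ∀ m ≤ n, ∀ X ∈ histL M f m, X ∈ T := fun m hm X hX =>
    hT (mem_board_of_mem (mem_histL.2 ((mem_histL.1 hX).imp fun j hj => ⟨hj.1.trans hm, hj.2⟩)))
  have hclT := hmodT.d01Closed hExt ⟨f 0, hboard 0 (Nat.zero_le n) _ (mem_histL.2 ⟨0, le_rfl, rfl⟩)⟩
  exact ⟨CondS M T, hk M T hcnt hmodT hclT, hboard⟩

end SoftImplications

/-! ### Countable reduced products -/

section UltrafilterQuantifiers

variable {α : ℕ → Type*} {U : Ultrafilter ℕ} {T : Set (∀ k, α k)} {dom : ∀ k, Set (α k)}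
  {p : ∀ k, α k → Prop}

/-- Łoś's lemma for a quantifier whose witnesses can be chosen uniformly inside `T`. -/
theorem forall_eventually_iff_eventually_forall (hT : ∀ c ∈ T, ∀ k, c k ∈ dom k)
    (hw : ∃ w ∈ T, ∀ k, (∃ a ∈ dom k, ¬ p k a) → ¬ p k (w k)) :
    (∀ c ∈ T, ∀ᶠ k in U, p k (c k)) ↔ ∀ᶠ k in U, ∀ a ∈ dom k, p k a := by
  refine ⟨fun h => ?_, fun h c hc => h.mono fun k hk => hk _ (hT c hc k)⟩
  obtain ⟨w, hwT, hw⟩ := hw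
  by_contra hne
  have hbad : ∀ᶠ k in U, ¬ p k (w k) :=
    (Ultrafilter.eventually_not.2 hne).mono fun k hk => hw k (by simpa using hk)
  exact Ultrafilter.eventually_not.1 hbad (h w hwT)

theorem exists_eventually_iff_eventually_exists (hT : ∀ c ∈ T, ∀ k, c k ∈ dom k)
    (hw : ∃ w ∈ T, ∀ k, (∃ a ∈ dom k, p k a) → p k (w k)) :
    (∃ c ∈ T, ∀ᶠ k in U, p k (c k)) ↔ ∀ᶠ k in U, ∃ a ∈ dom k, p k a := by
  refine ⟨fun ⟨c, hc, h⟩ => h.mono fun k hk => ⟨_, hT c hc k, hk⟩, fun h => ?_⟩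
  obtain ⟨w, hwT, hw⟩ := hw
  exact ⟨w, hwT, h.mono hw⟩

end UltrafilterQuantifiers

theorem eventually_ge_hyperfilter (n : ℕ) : ∀ᶠ k in Filter.hyperfilter ℕ, n ≤ k :=
  Nat.hyperfilter_le_atTop (Filter.eventually_ge_atTop n)

def finVal {β : Type*} (d : β) {n : ℕ} (a : Fin n → β) (i : ℕ) : β :=
  if h : i < n then a ⟨i, h⟩ else d

/-- The seeds are the sequences that the countable reduced product must contain. -/
structure ProductData where
  M : ℕ → L1Struc
  S : ∀ k, Set (Set (M k).carrier)
  numSeeds : Set (∀ k, (M k).carrier)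
  setSeeds : Set (∀ k, Set (M k).carrier)

namespace ProductData

variable (D : ProductData)

abbrev NumSeq : Type := ∀ k, (D.M k).carrier
abbrev SetSeq : Type := ∀ k, Set (D.M k).carrier

def zeroSeq : D.NumSeq := fun k => (D.M k).zero
def oneSeq : D.NumSeq := fun k => (D.M k).one
def addSeq (c d : D.NumSeq) : D.NumSeq := fun k => (D.M k).add (c k) (d k)
def mulSeq (c d : D.NumSeq) : D.NumSeq := fun k => (D.M k).mul (c k) (d k)

open Classical in
noncomputable def numWitness (φ : Formula) (x : ℕ) (v : ℕ → D.NumSeq) (V : ℕ → D.SetSeq) :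
    D.NumSeq := fun k =>
  if h : ∃ a, φ.Sat (D.M k) (D.S k) (Function.update (v · k) x a) (V · k) then h.choose
  else (D.M k).zero

open Classical in
noncomputable def setWitness (φ : Formula) (X : ℕ) (v : ℕ → D.NumSeq) (V : ℕ → D.SetSeq) :
    D.SetSeq := fun k =>
  if h : ∃ A ∈ D.S k, φ.Sat (D.M k) (D.S k) (v · k) (Function.update (V · k) X A) then h.choose
  else ∅

theorem numWitness_spec {φ : Formula} {x : ℕ} {v : ℕ → D.NumSeq} {V : ℕ → D.SetSeq} {k : ℕ}
    (h : ∃ a, φ.Sat (D.M k) (D.S k) (Function.update (v · k) x a) (V · k)) :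
    φ.Sat (D.M k) (D.S k) (Function.update (v · k) x (D.numWitness φ x v V k)) (V · k) := by
  rw [numWitness, dif_pos h]
  exact h.choose_spec

theorem setWitness_spec {φ : Formula} {X : ℕ} {v : ℕ → D.NumSeq} {V : ℕ → D.SetSeq} {k : ℕ}
    (h : ∃ A ∈ D.S k, φ.Sat (D.M k) (D.S k) (v · k) (Function.update (V · k) X A)) :
    φ.Sat (D.M k) (D.S k) (v · k) (Function.update (V · k) X (D.setWitness φ X v V k)) := by
  rw [setWitness, dif_pos h]
  exact h.choose_spec.2

theorem setWitness_mem (hSe : ∀ k, (∅ : Set (D.M k).carrier) ∈ D.S k) (φ : Formula) (X : ℕ)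
    (v : ℕ → D.NumSeq) (V : ℕ → D.SetSeq) (k : ℕ) : D.setWitness φ X v V k ∈ D.S k := by
  unfold setWitness
  split_ifs with h
  exacts [h.choose_spec.1, hSe k]

/-- Only finitely many parameter values are recorded (formulas have finitely many free
variables), which keeps every stage of the Skolem hull countable. -/
abbrev WitnessArgs (N : Set D.NumSeq) (F : Set D.SetSeq) : Type :=
  Formula × ℕ × (Σ n, Fin n → N) × (Σ n, Fin n → F)

def WitnessArgs.numVal {N : Set D.NumSeq} {F : Set D.SetSeq} (q : D.WitnessArgs N F) :
    ℕ → D.NumSeq :=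
  finVal D.zeroSeq fun i => (q.2.2.1.2 i).1

def WitnessArgs.setVal {N : Set D.NumSeq} {F : Set D.SetSeq} (q : D.WitnessArgs N F) :
    ℕ → D.SetSeq :=
  finVal (fun _ => ∅) fun i => (q.2.2.2.2 i).1

noncomputable def stage : ℕ → Set D.NumSeq × Set D.SetSeq
  | 0 => (D.numSeeds ∪ {D.zeroSeq, D.oneSeq}, D.setSeeds)
  | s + 1 =>
    let N := (stage s).1
    let F := (stage s).2
    (N ∪ Set.image2 D.addSeq N N ∪ Set.image2 D.mulSeq N N ∪
        Set.range fun q : D.WitnessArgs N F => D.numWitness q.1 q.2.1 (q.numVal D) (q.setVal D),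
      F ∪ Set.range fun q : D.WitnessArgs N F => D.setWitness q.1 q.2.1 (q.numVal D) (q.setVal D))

def nums : Set D.NumSeq := ⋃ s, (D.stage s).1

def sets : Set D.SetSeq := ⋃ s, (D.stage s).2

theorem stage_mono : Monotone D.stage :=
  monotone_nat_of_le_succ fun _ =>
    ⟨Set.subset_union_left.trans (Set.subset_union_left.trans Set.subset_union_left),
      Set.subset_union_left⟩

theorem stage_countable (hn : D.numSeeds.Countable) (hs : D.setSeeds.Countable) (s : ℕ) :
    (D.stage s).1.Countable ∧ (D.stage s).2.Countable := by
  induction s with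
  | zero => exact ⟨hn.union ((Set.countable_singleton _).insert _), hs⟩
  | succ s ih =>
    have := ih.1.to_subtype
    have := ih.2.to_subtype
    exact ⟨((ih.1.union (ih.1.image2 ih.1 _)).union (ih.1.image2 ih.1 _)).union
      (Set.countable_range _), ih.2.union (Set.countable_range _)⟩

theorem nums_countable (hn : D.numSeeds.Countable) (hs : D.setSeeds.Countable) :
    D.nums.Countable :=
  Set.countable_iUnion fun s => (D.stage_countable hn hs s).1

theorem zeroSeq_mem : D.zeroSeq ∈ D.nums :=
  Set.mem_iUnion.2 ⟨0, Or.inr (Or.inl rfl)⟩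

theorem oneSeq_mem : D.oneSeq ∈ D.nums :=
  Set.mem_iUnion.2 ⟨0, Or.inr (Or.inr rfl)⟩

theorem numSeeds_subset : D.numSeeds ⊆ D.nums :=
  fun _ h => Set.mem_iUnion.2 ⟨0, Or.inl h⟩

theorem setSeeds_subset : D.setSeeds ⊆ D.sets :=
  fun _ h => Set.mem_iUnion.2 ⟨0, h⟩

theorem eventually_mem_stage_fst {c : D.NumSeq} (hc : c ∈ D.nums) :
    ∀ᶠ s in Filter.atTop, c ∈ (D.stage s).1 := by
  obtain ⟨s, hs⟩ := Set.mem_iUnion.1 hc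
  exact Filter.eventually_atTop.2 ⟨s, fun _ ht => (D.stage_mono ht).1 hs⟩

theorem eventually_mem_stage_snd {B : D.SetSeq} (hB : B ∈ D.sets) :
    ∀ᶠ s in Filter.atTop, B ∈ (D.stage s).2 := by
  obtain ⟨s, hs⟩ := Set.mem_iUnion.1 hB
  exact Filter.eventually_atTop.2 ⟨s, fun _ ht => (D.stage_mono ht).2 hs⟩

theorem addSeq_mem {c d : D.NumSeq} (hc : c ∈ D.nums) (hd : d ∈ D.nums) :
    D.addSeq c d ∈ D.nums := by
  obtain ⟨s, hcs, hds⟩ :=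
    ((D.eventually_mem_stage_fst hc).and (D.eventually_mem_stage_fst hd)).exists
  exact Set.mem_iUnion.2 ⟨s + 1, Or.inl (Or.inl (Or.inr (Set.mem_image2_of_mem hcs hds)))⟩

theorem mulSeq_mem {c d : D.NumSeq} (hc : c ∈ D.nums) (hd : d ∈ D.nums) :
    D.mulSeq c d ∈ D.nums := by
  obtain ⟨s, hcs, hds⟩ :=
    ((D.eventually_mem_stage_fst hc).and (D.eventually_mem_stage_fst hd)).exists
  exact Set.mem_iUnion.2 ⟨s + 1, Or.inl (Or.inr (Set.mem_image2_of_mem hcs hds))⟩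

theorem exists_witnessArgs (φ : Formula) (x : ℕ) {v : ℕ → D.NumSeq} {V : ℕ → D.SetSeq}
    (hv : ∀ i, v i ∈ D.nums) (hV : ∀ i, V i ∈ D.sets) :
    ∃ s, ∃ q : D.WitnessArgs (D.stage s).1 (D.stage s).2, q.1 = φ ∧ q.2.1 = x ∧
      Set.EqOn (q.numVal D) v φ.numFV ∧ Set.EqOn (q.setVal D) V φ.setFV := by
  obtain ⟨n, hn⟩ := φ.exists_bound_fv
  obtain ⟨s, hs⟩ := ((Filter.eventually_all_finset (Finset.range n)).2 fun i _ =>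
    (D.eventually_mem_stage_fst (hv i)).and (D.eventually_mem_stage_snd (hV i))).exists
  refine ⟨s, (φ, x, ⟨n, fun i => ⟨v i, (hs i (by simp)).1⟩⟩,
    ⟨n, fun i => ⟨V i, (hs i (by simp)).2⟩⟩), rfl, rfl, fun i hi => ?_, fun i hi => ?_⟩
  · simp [WitnessArgs.numVal, finVal, hn i (Or.inl hi)]
  · simp [WitnessArgs.setVal, finVal, hn i (Or.inr hi)]

theorem exists_numWitness (φ : Formula) (x : ℕ) {v : ℕ → D.NumSeq} {V : ℕ → D.SetSeq}
    (hv : ∀ i, v i ∈ D.nums) (hV : ∀ i, V i ∈ D.sets) :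
    ∃ w ∈ D.nums, ∀ k, (∃ a, φ.Sat (D.M k) (D.S k) (Function.update (v · k) x a) (V · k)) →
      φ.Sat (D.M k) (D.S k) (Function.update (v · k) x (w k)) (V · k) := by
  obtain ⟨s, q, rfl, rfl, hqv, hqV⟩ := D.exists_witnessArgs φ x hv hV
  have hcongr : ∀ k a, q.1.Sat (D.M k) (D.S k) (Function.update (q.numVal D · k) q.2.1 a)
      (q.setVal D · k) ↔ q.1.Sat (D.M k) (D.S k) (Function.update (v · k) q.2.1 a) (V · k) :=
    fun k a => Formula.sat_congr (eqOn_update (fun i hi => congrFun (hqv hi) k) _ _)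
      fun i hi => congrFun (hqV hi) k
  refine ⟨_, Set.mem_iUnion.2 ⟨s + 1, Or.inr ⟨q, rfl⟩⟩, fun k ⟨a, ha⟩ => ?_⟩
  exact (hcongr k _).1 (D.numWitness_spec ⟨a, (hcongr k a).2 ha⟩)

theorem exists_setWitness (hSe : ∀ k, (∅ : Set (D.M k).carrier) ∈ D.S k) (φ : Formula) (X : ℕ)
    {v : ℕ → D.NumSeq} {V : ℕ → D.SetSeq} (hv : ∀ i, v i ∈ D.nums) (hV : ∀ i, V i ∈ D.sets) :
    ∃ W ∈ {B ∈ D.sets | ∀ k, B k ∈ D.S k}, ∀ k,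
      (∃ A ∈ D.S k, φ.Sat (D.M k) (D.S k) (v · k) (Function.update (V · k) X A)) →
        φ.Sat (D.M k) (D.S k) (v · k) (Function.update (V · k) X (W k)) := by
  obtain ⟨s, q, rfl, rfl, hqv, hqV⟩ := D.exists_witnessArgs φ X hv hV
  have hcongr : ∀ k A, q.1.Sat (D.M k) (D.S k) (q.numVal D · k)
      (Function.update (q.setVal D · k) q.2.1 A) ↔
      q.1.Sat (D.M k) (D.S k) (v · k) (Function.update (V · k) q.2.1 A) :=
    fun k A => Formula.sat_congr (fun i hi => congrFun (hqv hi) k)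
      (eqOn_update (fun i hi => congrFun (hqV hi) k) _ _)
  refine ⟨_, ⟨Set.mem_iUnion.2 ⟨s + 1, Or.inr ⟨q, rfl⟩⟩, D.setWitness_mem hSe _ _ _ _⟩,
    fun k ⟨A, hA, hsat⟩ => ?_⟩
  exact (hcongr k _).1 (D.setWitness_spec ⟨A, hA, (hcongr k A).2 hsat⟩)

variable (U : Ultrafilter ℕ)

def eqSetoid : Setoid D.nums where
  r c d := ∀ᶠ k in U, c.1 k = d.1 k
  iseqv := ⟨fun _ => .of_forall fun _ => rfl, fun h => h.mono fun _ => Eq.symm,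
    fun h₁ h₂ => (h₁.and h₂).mono fun _ h => h.1.trans h.2⟩

/-- The reduced product `∏ₖ M k / U`, restricted to the countable Skolem hull of the seeds. -/
noncomputable def redProd : L1Struc where
  carrier := Quotient (D.eqSetoid U)
  zero := ⟦⟨D.zeroSeq, D.zeroSeq_mem⟩⟧
  one := ⟦⟨D.oneSeq, D.oneSeq_mem⟩⟧
  add := Quotient.map₂ (fun c d => ⟨D.addSeq c d, D.addSeq_mem c.2 d.2⟩) fun _ _ hc _ _ hd =>
    (hc.and hd).mono fun k h => by simp only [addSeq, h.1, h.2]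
  mul := Quotient.map₂ (fun c d => ⟨D.mulSeq c d, D.mulSeq_mem c.2 d.2⟩) fun _ _ hc _ _ hd =>
    (hc.and hd).mono fun k h => by simp only [mulSeq, h.1, h.2]
  lt := Quotient.lift₂ (fun c d => ∀ᶠ k in U, (D.M k).lt (c.1 k) (d.1 k)) fun _ _ _ _ hc hd =>
    propext (Filter.eventually_congr ((hc.and hd).mono fun k h => by rw [h.1, h.2]))

def numClass (c : D.nums) : (D.redProd U).carrier := Quotient.mk (D.eqSetoid U) c

theorem numClass_eq_numClass {c d : D.nums} :
    D.numClass U c = D.numClass U d ↔ ∀ᶠ k in U, c.1 k = d.1 k :=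
  Quotient.eq

theorem forall_carrier {p : (D.redProd U).carrier → Prop} : (∀ a, p a) ↔ ∀ c, p (D.numClass U c) :=
  Quotient.forall

theorem exists_carrier {p : (D.redProd U).carrier → Prop} : (∃ a, p a) ↔ ∃ c, p (D.numClass U c) :=
  Quotient.exists

theorem countable_redProd (hn : D.numSeeds.Countable) (hs : D.setSeeds.Countable) :
    Countable (D.redProd U).carrier := by
  have := (D.nums_countable hn hs).to_subtype
  exact Quotient.countable

def setClass (B : D.SetSeq) : Set (D.redProd U).carrier :=
  {x | Quotient.lift (fun c : D.nums => ∀ᶠ k in U, c.1 k ∈ B k)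
    (fun c d (h : ∀ᶠ k in U, c.1 k = d.1 k) =>
      propext (Filter.eventually_congr (h.mono fun k hk => by rw [hk]))) x}

theorem setClass_congr {A B : D.SetSeq} (h : ∀ᶠ k in U, A k = B k) :
    D.setClass U A = D.setClass U B := by
  ext x
  induction x using Quotient.inductionOn
  exact Filter.eventually_congr (h.mono fun k hk => by rw [hk])

def redProdSets : Set (Set (D.redProd U).carrier) :=
  D.setClass U '' {B ∈ D.sets | ∀ k, B k ∈ D.S k}

theorem val_mem (t : Term) (v : ℕ → D.nums) :
    (fun k => t.val (D.M k) (fun i => (v i).1 k)) ∈ D.nums := by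
  induction t with
  | var i => exact (v i).2
  | zero => exact D.zeroSeq_mem
  | one => exact D.oneSeq_mem
  | add t s iht ihs => exact D.addSeq_mem iht ihs
  | mul t s iht ihs => exact D.mulSeq_mem iht ihs

theorem val_numClass (t : Term) (v : ℕ → D.nums) :
    t.val (D.redProd U) (D.numClass U ∘ v) =
      D.numClass U ⟨fun k => t.val (D.M k) (fun i => (v i).1 k), D.val_mem t v⟩ := by
  induction t with
  | var | zero | one => rfl
  | add t s iht ihs | mul t s iht ihs =>
    simp only [Term.val, iht, ihs]
    rfl

theorem numM_seq_mem (e : ℕ) : (fun k => numM (D.M k) e) ∈ D.nums := by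
  induction e with
  | zero => exact D.zeroSeq_mem
  | succ e ih => exact D.addSeq_mem ih D.oneSeq_mem

theorem numM_redProd (e : ℕ) :
    numM (D.redProd U) e = D.numClass U ⟨_, D.numM_seq_mem e⟩ := by
  induction e with
  | zero => rfl
  | succ e ih =>
    simp only [numM, ih]
    rfl

theorem coord_update_num (v : ℕ → D.nums) (x : ℕ) (c : D.nums) (k : ℕ) :
    (fun i => (Function.update v x c i).1 k) = Function.update (fun i => (v i).1 k) x (c.1 k) :=
  Function.comp_update (fun c : D.nums => c.1 k) v x c

theorem coord_update_set (V : ℕ → D.SetSeq) (X : ℕ) (B : D.SetSeq) (k : ℕ) :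
    (fun i => Function.update V X B i k) = Function.update (V · k) X (B k) :=
  Function.comp_update (fun B : D.SetSeq => B k) V X B

theorem forall_mem_redProdSets {p : Set (D.redProd U).carrier → Prop} :
    (∀ A ∈ D.redProdSets U, p A) ↔ ∀ B ∈ {B ∈ D.sets | ∀ k, B k ∈ D.S k}, p (D.setClass U B) :=
  Set.forall_mem_image

theorem exists_mem_redProdSets {p : Set (D.redProd U).carrier → Prop} :
    (∃ A ∈ D.redProdSets U, p A) ↔ ∃ B ∈ {B ∈ D.sets | ∀ k, B k ∈ D.S k}, p (D.setClass U B) :=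
  Set.exists_mem_image

theorem update_mem_sets {V : ℕ → D.SetSeq} (hV : ∀ i, V i ∈ D.sets) {B : D.SetSeq}
    (hB : B ∈ D.sets) (X : ℕ) : ∀ i, Function.update V X B i ∈ D.sets :=
  (Function.forall_update_iff V fun _ B => B ∈ D.sets).2 ⟨hB, fun i _ => hV i⟩

/-- **Łoś's theorem** for the countable reduced product. -/
theorem sat_redProd_iff (hSe : ∀ k, (∅ : Set (D.M k).carrier) ∈ D.S k) (φ : Formula)
    (v : ℕ → D.nums) (V : ℕ → D.SetSeq) (hV : ∀ i, V i ∈ D.sets) :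
    φ.Sat (D.redProd U) (D.redProdSets U) (D.numClass U ∘ v) (D.setClass U ∘ V) ↔
      ∀ᶠ k in U, φ.Sat (D.M k) (D.S k) (fun i => (v i).1 k) (V · k) := by
  induction φ generalizing v V with
  | eq t s => simp only [Formula.Sat, val_numClass, numClass_eq_numClass]
  | lt t s | mem t X => simp only [Formula.Sat, val_numClass]; rfl
  | not φ ih => simp only [Formula.Sat, ih v V hV, Ultrafilter.eventually_not]
  | and φ ψ ihφ ihψ => simp only [Formula.Sat, ihφ v V hV, ihψ v V hV, Filter.eventually_and]
  | or φ ψ ihφ ihψ => simp only [Formula.Sat, ihφ v V hV, ihψ v V hV, Ultrafilter.eventually_or]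
  | imp φ ψ ihφ ihψ =>
    simp only [Formula.Sat, ihφ v V hV, ihψ v V hV, Ultrafilter.eventually_imp]
  | allN x φ ih =>
    simp only [Formula.Sat, D.forall_carrier, ← Function.comp_update, ih _ V hV,
      coord_update_num, Subtype.forall]
    simpa only [Set.mem_univ, forall_const] using
      forall_eventually_iff_eventually_forall (U := U) (dom := fun _ => Set.univ)
        (fun _ _ _ => Set.mem_univ _) (by
          simpa only [Set.mem_univ, true_and, Formula.Sat] using
            D.exists_numWitness (.not φ) x (fun i => (v i).2) hV)
  | exN x φ ih =>
    simp only [Formula.Sat, D.exists_carrier, ← Function.comp_update, ih _ V hV,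
      coord_update_num, Subtype.exists, exists_prop]
    simpa only [Set.mem_univ, true_and] using
      exists_eventually_iff_eventually_exists (U := U) (dom := fun _ => Set.univ)
        (fun _ _ _ => Set.mem_univ _) (by
          simpa only [Set.mem_univ, true_and] using
            D.exists_numWitness φ x (fun i => (v i).2) hV)
  | allS X φ ih =>
    simp only [Formula.Sat, D.forall_mem_redProdSets, ← Function.comp_update]
    rw [← forall_eventually_iff_eventually_forall (fun B hB k => hB.2 k)
      (p := fun k A => φ.Sat (D.M k) (D.S k) (fun i => (v i).1 k) (Function.update (V · k) X A))
      (D.exists_setWitness hSe (.not φ) X (fun i => (v i).2) hV)]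
    exact forall₂_congr fun B hB => by
      rw [ih v _ (D.update_mem_sets hV hB.1 X)]; simp only [coord_update_set]
  | exS X φ ih =>
    simp only [Formula.Sat, D.exists_mem_redProdSets, ← Function.comp_update]
    rw [← exists_eventually_iff_eventually_exists (fun B hB k => hB.2 k)
      (p := fun k A => φ.Sat (D.M k) (D.S k) (fun i => (v i).1 k) (Function.update (V · k) X A))
      (D.exists_setWitness hSe φ X (fun i => (v i).2) hV)]
    exact exists_congr fun B => and_congr_right fun hB => by
      rw [ih v _ (D.update_mem_sets hV hB.1 X)]; simp only [coord_update_set]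

theorem sat_redProd_iff_of_isArithmetic (hSe : ∀ k, (∅ : Set (D.M k).carrier) ∈ D.S k)
    {φ : Formula} (hφ : φ.IsArithmetic) (v : ℕ → D.nums) (V : ℕ → D.SetSeq)
    (hV : ∀ i, V i ∈ D.sets) (E : Set (Set (D.redProd U).carrier))
    (Ek : ∀ k, Set (Set (D.M k).carrier)) :
    φ.Sat (D.redProd U) E (D.numClass U ∘ v) (D.setClass U ∘ V) ↔
      ∀ᶠ k in U, φ.Sat (D.M k) (Ek k) (fun i => (v i).1 k) (V · k) :=
  hφ.sat_iff.trans ((D.sat_redProd_iff U hSe φ v V hV).trans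
    (Filter.eventually_congr (.of_forall fun _ => hφ.sat_iff)))

theorem models2_redProd (hSe : ∀ k, (∅ : Set (D.M k).carrier) ∈ D.S k) {Γ : Set Formula}
    (hmod : ∀ k, Models2 (D.M k) (D.S k) Γ) : Models2 (D.redProd U) (D.redProdSets U) Γ := by
  intro φ hφ v V hV
  choose c hc using fun i => Quotient.exists_rep (v i)
  choose B hB hBV using hV
  obtain rfl : D.numClass U ∘ c = v := funext hc
  obtain rfl : D.setClass U ∘ B = V := funext hBV
  exact (D.sat_redProd_iff U hSe φ c B fun i => (hB i).1).2
    (.of_forall fun k => hmod k φ hφ _ _ fun i => (hB i).2 k)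

theorem cantorPairRel_redProd (a b c : D.nums) :
    cantorPairRel (D.redProd U) (D.numClass U a) (D.numClass U b) (D.numClass U c) ↔
      ∀ᶠ k in U, cantorPairRel (D.M k) (a.1 k) (b.1 k) (c.1 k) :=
  D.numClass_eq_numClass U

theorem satIdx_redProd (hSe : ∀ k, (∅ : Set (D.M k).carrier) ∈ D.S k) {θ : Formula}
    (hθ : θ.IsArithmetic) (a c : D.nums) {B : D.SetSeq} (hB : B ∈ D.sets) :
    satIdx θ (D.redProd U) (D.numClass U a) (D.numClass U c) (D.setClass U B) ↔
      ∀ᶠ k in U, satIdx θ (D.M k) (a.1 k) (c.1 k) (B k) := by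
  let v : ℕ → D.nums := fun m =>
    if m = 0 then a else if m = 1 then c else ⟨D.zeroSeq, D.zeroSeq_mem⟩
  have hv : D.numClass U ∘ v = fun m => if m = 0 then D.numClass U a
      else if m = 1 then D.numClass U c else (D.redProd U).zero := by
    funext m
    simp only [v, Function.comp_apply]
    split_ifs <;> rfl
  have hvk : ∀ k, (fun m => (v m).1 k) =
      fun m => if m = 0 then a.1 k else if m = 1 then c.1 k else (D.M k).zero := fun k => by
    funext m
    simp only [v]
    split_ifs <;> rfl
  have := D.sat_redProd_iff_of_isArithmetic U hSe hθ v (fun _ => B) (fun _ => hB) Set.univ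
    fun _ => Set.univ
  simp only [hv, hvk] at this
  exact this

def joinFormula : Formula :=
  .exN 1 (.or (.and (.mem (.var 1) 0) (.eq (.var 0) (.add (.var 1) (.var 1))))
    (.and (.mem (.var 1) 1) (.eq (.var 0) (.add (.add (.var 1) (.var 1)) .one))))

theorem sat_joinFormula {M : L1Struc} {E : Set (Set M.carrier)} {v : ℕ → M.carrier}
    {V : ℕ → Set M.carrier} : joinFormula.Sat M E v V ↔ v 0 ∈ joinM M (V 0) (V 1) := by
  simp only [joinFormula, Formula.Sat, Term.val, Function.update_self,
    Function.update_of_ne (show (0 : ℕ) ≠ 1 by decide), joinM, Set.mem_ofPred_eq, exists_or]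

theorem joinM_setClass (hSe : ∀ k, (∅ : Set (D.M k).carrier) ∈ D.S k) {A B : D.SetSeq}
    (hA : A ∈ D.sets) (hB : B ∈ D.sets) :
    joinM (D.redProd U) (D.setClass U A) (D.setClass U B) =
      D.setClass U fun k => joinM (D.M k) (A k) (B k) := by
  ext x
  induction x using Quotient.inductionOn with
  | h c =>
    have := D.sat_redProd_iff_of_isArithmetic U hSe (φ := joinFormula)
      ⟨⟨trivial, trivial⟩, trivial, trivial⟩ (fun _ => c) (fun i => if i = 0 then A else B) (fun i => by split_ifs; exacts [hA, hB])
      Set.univ fun _ => Set.univ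
    simp only [sat_joinFormula, Function.comp_apply, if_neg one_ne_zero] at this
    exact this

end ProductData

/-! ### The limit of longer and longer runs -/

structure LongCodeRun (Γ : Set Formula) (θ : Formula) (k : Nat.Partrec.Code)
    (P Q : Pi12Problem) (n₀ : ℕ) where
  M : L1Struc
  S : Set (Set M.carrier)
  f : ℕ → Set M.carrier
  g : ℕ → Prop × Set M.carrier
  countable : Countable M.carrier
  models : Models2 M S Γ
  closed : D01Closed M S
  followsCode : ∀ n, Alive P Q M (CondS M S) f g n → CodeMove θ M k (histL M f n) (g n)
  alive : Alive P Q M (CondS M S) f g n₀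

section LongCodeRun

variable {Γ : Set Formula} {θ : Formula} {k : Nat.Partrec.Code} {P Q : Pi12Problem}

theorem nonempty_longCodeRun {n₀ : ℕ} (hk : ∀ (M : L1Struc) (S : Set (Set M.carrier)),
      Countable M.carrier → Models2 M S Γ → D01Closed M S → P2CompWinsC θ k P Q M (CondS M S))
    (hn₀ : ¬ ∀ (M : L1Struc) (S : Set (Set M.carrier)), Countable M.carrier →
      Models2 M S Γ → D01Closed M S → P2CompWinsCWithin θ k P Q M (CondS M S) n₀) :
    Nonempty (LongCodeRun Γ θ k P Q n₀) := by
  simp only [P2CompWinsCWithin, not_forall] at hn₀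
  obtain ⟨M, S, hcnt, hmod, hcl, f, g, hfg⟩ := hn₀
  obtain ⟨htot, hwin⟩ := hk M S hcnt hmod hcl f g
  by_contra hempty
  exact hfg ⟨htot, fun hcf =>
    ⟨(hwin hcf).1, fun hal => hempty ⟨⟨M, S, f, g, hcnt, hmod, hcl, hcf, hal⟩⟩⟩⟩

end LongCodeRun

section LimitRun

variable {Γ : Set Formula} {θ : Formula} {code : Nat.Partrec.Code} {P Q : Pi12Problem}
  (R : ∀ n, LongCodeRun Γ θ code P Q n) (i j : ℕ → ∀ k, (R k).M.carrier)

def joinSeq (n k : ℕ) : Set (R k).M.carrier := joinList (R k).M (histL (R k).M (R k).f n)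

/-- Since `code.eval n` has at most one value, all runs that reach stage `n` use the same
index `e` there. -/
theorem exists_decodedPhi_seq (n : ℕ) :
    ∃ e ∈ code.eval n, ∃ i j : ∀ k, (R k).M.carrier,
      ∀ k, n ≤ k → IsDecodedPhi θ (R k).M e (i k) (j k) (joinSeq R n k) ((R k).g n) := by
  have hmove : ∀ k, n ≤ k → ∃ e ∈ code.eval n, ∃ i j,
      IsDecodedPhi θ (R k).M e i j (joinSeq R n k) ((R k).g n) := fun k hk => by
    simpa [codeMove_iff, histL_length, joinSeq] using (R k).followsCode n ((R k).alive.of_le hk)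
  obtain ⟨e, he, -⟩ := hmove n le_rfl
  have : ∀ k, ∃ i j : (R k).M.carrier, n ≤ k →
      IsDecodedPhi θ (R k).M e i j (joinSeq R n k) ((R k).g n) := fun k => by
    by_cases hk : n ≤ k
    · obtain ⟨e', he', i, j, h⟩ := hmove k hk
      exact ⟨i, j, fun _ => Part.mem_unique he' he ▸ h⟩
    · exact ⟨(R k).M.zero, (R k).M.zero, fun h => absurd h hk⟩
  choose i j hij using this
  exact ⟨e, he, i, j, hij⟩

-- Only the runs `R k` with `m ≤ k` are known to reach stage `m`; the others contribute
-- `∅ ∈ S k`, so that the limit move lies in the limit second-order part.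
def move1Seq (m k : ℕ) : Set (R k).M.carrier := if m ≤ k then (R k).f m else ∅

def move2Seq (n k : ℕ) : Set (R k).M.carrier := ((R k).g n).2

/-- Seeded with what the limit run is made of: the indices of Player 2's moves, the moves of
both players, and the joins of Player 1's moves. -/
abbrev limitData : ProductData where
  M k := (R k).M
  S k := (R k).S
  numSeeds := Set.range i ∪ Set.range j
  setSeeds := Set.range (move1Seq R) ∪ Set.range (move2Seq R) ∪ Set.range (joinSeq R)

noncomputable abbrev limitModel : L1Struc := (limitData R i j).redProd (Filter.hyperfilter ℕ)

noncomputable def limitSets : Set (Set (limitModel R i j).carrier) :=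
  (limitData R i j).redProdSets (Filter.hyperfilter ℕ)

noncomputable def limitMove1 (m : ℕ) : Set (limitModel R i j).carrier :=
  (limitData R i j).setClass (Filter.hyperfilter ℕ) (move1Seq R m)

noncomputable def limitMove2 (n : ℕ) : Prop × Set (limitModel R i j).carrier :=
  (∀ᶠ k in Filter.hyperfilter ℕ, ((R k).g n).1,
    (limitData R i j).setClass (Filter.hyperfilter ℕ) (move2Seq R n))

theorem limitData_empty_mem (k : ℕ) :
    (∅ : Set ((limitData R i j).M k).carrier) ∈ (limitData R i j).S k :=
  (R k).closed.empty_mem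

theorem move1Seq_mem_sets (m : ℕ) : move1Seq R m ∈ (limitData R i j).sets :=
  (limitData R i j).setSeeds_subset (Or.inl (Or.inl ⟨m, rfl⟩))

theorem move2Seq_mem_sets (n : ℕ) : move2Seq R n ∈ (limitData R i j).sets :=
  (limitData R i j).setSeeds_subset (Or.inl (Or.inr ⟨n, rfl⟩))

theorem joinSeq_mem_sets (n : ℕ) : joinSeq R n ∈ (limitData R i j).sets :=
  (limitData R i j).setSeeds_subset (Or.inr ⟨n, rfl⟩)

theorem eventually_alive (n : ℕ) :
    ∀ᶠ k in Filter.hyperfilter ℕ, Alive P Q (R k).M (CondS (R k).M (R k).S) (R k).f (R k).g n :=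
  (eventually_ge_hyperfilter n).mono fun k hk => (R k).alive.of_le hk

theorem move1Seq_mem_S (m k : ℕ) : move1Seq R m k ∈ (R k).S := by
  unfold move1Seq
  split_ifs with h
  · exact ((R k).alive.of_le h).cond _ (mem_histL.2 ⟨m, le_rfl, rfl⟩)
  · exact (R k).closed.empty_mem

theorem limit_condS (n : ℕ) :
    CondS (limitModel R i j) (limitSets R i j) (histL _ (limitMove1 R i j) n) := by
  intro X hX
  obtain ⟨m, -, rfl⟩ := mem_histL.1 hX
  exact ⟨move1Seq R m, ⟨move1Seq_mem_sets R i j m, move1Seq_mem_S R m⟩, rfl⟩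

theorem limit_models : Models2 (limitModel R i j) (limitSets R i j) Γ :=
  (limitData R i j).models2_redProd _ (limitData_empty_mem R i j) fun k => (R k).models

theorem limit_countable : Countable (limitModel R i j).carrier :=
  (limitData R i j).countable_redProd _ ((Set.countable_range _).union (Set.countable_range _))
    (((Set.countable_range _).union (Set.countable_range _)).union (Set.countable_range _))

theorem limit_closed (hExt : Delta01CA ⊆ Γ) : D01Closed (limitModel R i j) (limitSets R i j) :=
  (limit_models R i j).d01Closed hExt ⟨_, limit_condS R i j 0 _ (mem_histL.2 ⟨0, le_rfl, rfl⟩)⟩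

theorem limit_inst (hP : P.theta.IsArithmetic) : P.Inst (limitModel R i j) (limitMove1 R i j 0) :=
  ((limitData R i j).sat_redProd_iff_of_isArithmetic _ (limitData_empty_mem R i j) hP
    (fun _ => ⟨_, (limitData R i j).zeroSeq_mem⟩) (fun _ => move1Seq R 0)
    (fun _ => move1Seq_mem_sets R i j 0) Set.univ fun _ => Set.univ).2
    (.of_forall fun k => by
      rw [move1Seq, if_pos (Nat.zero_le k)]
      exact ((R k).alive.of_le (Nat.zero_le k)).1)

theorem limit_sol (hQ : Q.psi.IsArithmetic) (n : ℕ) :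
    Q.Sol (limitModel R i j) (limitMove2 R i j n).2 (limitMove1 R i j (n + 1)) := by
  let V : ℕ → (limitData R i j).SetSeq := fun m =>
    if m = 0 then move2Seq R n else move1Seq R (n + 1)
  have hV : ∀ m, V m ∈ (limitData R i j).sets := fun m => by
    simp only [V]
    split_ifs
    exacts [move2Seq_mem_sets R i j n, move1Seq_mem_sets R i j (n + 1)]
  have hVcls : (fun m => if m = 0 then (limitMove2 R i j n).2 else limitMove1 R i j (n + 1)) =
      (limitData R i j).setClass (Filter.hyperfilter ℕ) ∘ V := by
    funext m
    simp only [V, Function.comp_apply]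
    split_ifs <;> rfl
  unfold Pi12Problem.Sol
  rw [hVcls]
  refine ((limitData R i j).sat_redProd_iff_of_isArithmetic _ (limitData_empty_mem R i j) hQ
    (fun _ => ⟨_, (limitData R i j).zeroSeq_mem⟩) V hV _ fun _ => Set.univ).2
    ((eventually_alive R (n + 1)).mp ((eventually_ge_hyperfilter (n + 1)).mono fun k hk hal => ?_))
  have hVk : (fun m => if m = 0 then ((R k).g n).2 else (R k).f (n + 1)) = fun m => V m k := by
    funext m
    simp only [V]
    split_ifs
    · rfl
    · exact (if_pos hk).symm
  have hsol := hal.2.2.2.2.1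
  unfold Pi12Problem.Sol at hsol
  rw [hVk] at hsol
  exact hsol

theorem limit_not_won (n : ℕ) : ¬ (limitMove2 R i j n).1 := fun h =>
  let ⟨_, hal, hwon⟩ := ((eventually_alive R (n + 1)).and h).exists
  hal.2.1 hwon

theorem joinList_limit (n : ℕ) :
    joinList (limitModel R i j) (histL _ (limitMove1 R i j) n) =
      (limitData R i j).setClass (Filter.hyperfilter ℕ) (joinSeq R n) := by
  induction n with
  | zero =>
    refine (limitData R i j).setClass_congr _ (.of_forall fun k => ?_)
    simp [move1Seq, joinSeq, histL, joinList]
  | succ n ih =>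
    rw [joinList_histL_succ, ih, limitMove1, (limitData R i j).joinM_setClass _
      (limitData_empty_mem R i j) (joinSeq_mem_sets R i j n) (move1Seq_mem_sets R i j (n + 1))]
    refine (limitData R i j).setClass_congr _
      ((eventually_ge_hyperfilter (n + 1)).mono fun k hk => ?_)
    simp only [move1Seq, if_pos hk, joinSeq, joinList_histL_succ]

theorem limit_codeMove (hθ : θ.IsArithmetic) {e : ℕ → ℕ} (he : ∀ n, e n ∈ code.eval n)
    (hij : ∀ n k, n ≤ k →
      IsDecodedPhi θ (R k).M (e n) (i n k) (j n k) (joinSeq R n k) ((R k).g n)) (n : ℕ) :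
    CodeMove θ (limitModel R i j) code (histL _ (limitMove1 R i j) n) (limitMove2 R i j n) := by
  set D := limitData R i j
  set U := Filter.hyperfilter ℕ
  have hSe := limitData_empty_mem R i j
  have hJ := joinSeq_mem_sets R i j n
  have hev : ∀ᶠ k in U, IsDecodedPhi θ (R k).M (e n) (i n k) (j n k) (joinSeq R n k) ((R k).g n) :=
    (eventually_ge_hyperfilter n).mono (hij n)
  let i' : D.nums := ⟨i n, D.numSeeds_subset (Or.inl ⟨n, rfl⟩)⟩
  let j' : D.nums := ⟨j n, D.numSeeds_subset (Or.inr ⟨n, rfl⟩)⟩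
  rw [codeMove_iff, histL_length, joinList_limit, Nat.add_sub_cancel]
  refine ⟨e n, he n, D.numClass U i', D.numClass U j', ?_, fun x => ?_, Prod.ext ?_ ?_⟩
  · rw [D.numM_redProd, D.cantorPairRel_redProd]
    exact hev.mono fun k hk => hk.1
  · induction x using Quotient.inductionOn with
    | h c =>
      change satIdx θ _ (D.numClass U i') (D.numClass U c) _ ↔
        ¬ satIdx θ _ (D.numClass U j') (D.numClass U c) _
      rw [D.satIdx_redProd U hSe hθ _ _ hJ, D.satIdx_redProd U hSe hθ _ _ hJ,
        ← Ultrafilter.eventually_not]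
      exact Filter.eventually_congr (hev.mono fun k hk => hk.2.1 (c.1 k))
  · refine propext ((Filter.eventually_congr (hev.mono fun k hk => ?_)).trans
      (D.satIdx_redProd U hSe hθ i' ⟨_, D.zeroSeq_mem⟩ hJ).symm)
    exact (congrArg Prod.fst hk.2.2).to_iff
  · ext x
    induction x using Quotient.inductionOn with
    | h c =>
      refine (Filter.eventually_congr (hev.mono fun k hk => ?_)).trans
        (D.satIdx_redProd U hSe hθ i' ⟨_, D.addSeq_mem c.2 D.oneSeq_mem⟩ hJ).symm
      exact Set.ext_iff.1 (congrArg Prod.snd hk.2.2) (c.1 k)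

end LimitRun

section HardImplication

variable {Γ : Set Formula} {θ : Formula} {P Q : Pi12Problem}

theorem P2CompWinsHat.exists_p2CompWinsHatWithin (hExt : Delta01CA ⊆ Γ)
    (hθ : θ.IsArithmetic) (hP : P.theta.IsArithmetic) (hQ : Q.psi.IsArithmetic) :
    P2CompWinsHat Γ θ P Q → ∃ n₀, P2CompWinsHatWithin Γ θ P Q n₀ := by
  rintro ⟨code, hcode⟩
  by_contra hnone
  have R : ∀ n, LongCodeRun Γ θ code P Q n := fun n =>
    (nonempty_longCodeRun hcode fun h => hnone ⟨n, code, h⟩).some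
  choose e he i j hij using exists_decodedPhi_seq R
  have hrun := (hcode _ _ (limit_countable R i j) (limit_models R i j) (limit_closed R i j hExt)
    (limitMove1 R i j) (limitMove2 R i j)).2 fun n _ => limit_codeMove R i j hθ he hij n
  refine hrun.2 fun n => ?_
  induction n with
  | zero => exact ⟨limit_inst R i j hP, limit_condS R i j 0⟩
  | succ n ih =>
    obtain ⟨hnw, hboard, hinst⟩ | ⟨hwon, -⟩ := hrun.1 n ih
    · exact ⟨ih, hnw, hboard, hinst, limit_sol R i j hQ n, limit_condS R i j (n + 1)⟩
    · exact absurd hwon (limit_not_won R i j n)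

end HardImplication

theorem statement9_general (Γ : Set Formula) (hExt : Delta01CA ⊆ Γ)
    (θ : Formula) (hθ : UnivSigma01 Γ θ)
    (P Q : Pi12Problem) (hP : P.WellFormed) (hQ : Q.WellFormed) :
    (P2CompWinsG Γ θ P Q ↔ P2CompWinsHat Γ θ P Q) ∧
    (P2CompWinsG Γ θ P Q ↔ ∃ n : ℕ, P2CompWinsGWithin Γ θ P Q n) ∧
    (P2CompWinsG Γ θ P Q ↔ ∃ n : ℕ, P2CompWinsHatWithin Γ θ P Q n) ∧
    (∀ n : ℕ, P2CompWinsGWithin Γ θ P Q n ↔ P2CompWinsHatWithin Γ θ P Q n) := by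
  have hat_within : P2CompWinsHat Γ θ P Q → ∃ n, P2CompWinsHatWithin Γ θ P Q n :=
    P2CompWinsHat.exists_p2CompWinsHatWithin hExt hθ.1.1.isArithmetic hP.1 hQ.2.1
  have within_iff : ∀ n, P2CompWinsGWithin Γ θ P Q n ↔ P2CompWinsHatWithin Γ θ P Q n :=
    fun _ => ⟨P2CompWinsGWithin.p2CompWinsHatWithin, P2CompWinsHatWithin.p2CompWinsGWithin hExt⟩
  have g_iff_hatWithin : P2CompWinsG Γ θ P Q ↔ ∃ n, P2CompWinsHatWithin Γ θ P Q n :=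
    ⟨fun h => hat_within h.p2CompWinsHat,
      fun ⟨n, h⟩ => ((within_iff n).2 h).p2CompWinsG⟩
  refine ⟨⟨P2CompWinsG.p2CompWinsHat, fun h => g_iff_hatWithin.2 (hat_within h)⟩, ?_,
    g_iff_hatWithin, within_iff⟩
  simp only [g_iff_hatWithin, within_iff]

/-- Let `Γ` be a consistent extension of Δ⁰₁-comprehension that proves the existence of a
universal Σ⁰₁ formula `θ`, and let `P`, `Q` be Π¹₂-problems. The following are equivalent:
(1) Player 2 has a computable winning strategy for `G^Γ(Q → P)`;
(2) Player 2 has a computable winning strategy for `Ĝ^Γ(Q → P)`;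
(3) there is an `n` such that Player 2 has a computable strategy for `G^Γ(Q → P)` ensuring
victory in at most `n` moves;
(4) there is an `n` such that Player 2 has a computable strategy for `Ĝ^Γ(Q → P)` ensuring
victory in at most `n` moves.
Furthermore, `n` witnesses (3) iff it witnesses (4). -/
theorem statement9 (Γ : Set Formula) (hCons : SemConsistent Γ) (hExt : Delta01CA ⊆ Γ)
    (θ : Formula) (hθ : UnivSigma01 Γ θ)
    (P Q : Pi12Problem) (hP : P.WellFormed) (hQ : Q.WellFormed) :
    (P2CompWinsG Γ θ P Q ↔ P2CompWinsHat Γ θ P Q) ∧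
    (P2CompWinsG Γ θ P Q ↔ ∃ n : ℕ, P2CompWinsGWithin Γ θ P Q n) ∧
    (P2CompWinsG Γ θ P Q ↔ ∃ n : ℕ, P2CompWinsHatWithin Γ θ P Q n) ∧
    (∀ n : ℕ, P2CompWinsGWithin Γ θ P Q n ↔ P2CompWinsHatWithin Γ θ P Q n) :=
  statement9_general Γ hExt θ hθ P Q hP hQ

end SOA
end

section
/- RT¹₂ ≰_gW C_ℕ; that is, Player 2 has no computable winning strategy for the reduction game G(C_ℕ → RT¹₂) over the standard natural numbers. -/
/-!
Player 1 plays a coloring `d : ℕ → 2`, viewed as a point of Cantor space, and then answers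
Player 2's `C_ℕ`-instances. Everything Player 2 computes at a stage is a Σ⁰₁ property of `d`,
hence holds on an open set of colorings. On an open set of colorings Player 2 can never declare
victory: fixing `x` in the proposed homogeneous set, recolor all large numbers with the color
opposite to that of `x`. Nor can every answer be refuted densely in an open set: by the Baire
category theorem some coloring would refute all answers, and Player 2's `C_ℕ`-instance would
be empty. So every stage is survived on a smaller cylinder, and by compactness a coloring in
all these cylinders yields an infinite run, which Player 1 wins.
-/

namespace SOA

open Set PiNat

section Semantics

lemma Term.val_update_of_notMem_fv (M : L1Struc) {x : ℕ} {t : Term} (h : x ∉ t.fv)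
    (v : ℕ → M.carrier) (a : M.carrier) : t.val M (Function.update v x a) = t.val M v := by
  induction t with
  | var i =>
    have hix : i ≠ x := fun hix => h (by simp [Term.fv, hix])
    simp [Term.val, Function.update_of_ne hix]
  | zero | one => rfl
  | add t s iht ihs | mul t s iht ihs =>
    simp only [Term.fv, mem_union, not_or] at h
    simp only [Term.val, iht h.1, ihs h.2]

def AgreeBelow (B : ℕ) (X Y : Set ℕ) : Prop := ∀ x < B, (x ∈ X ↔ x ∈ Y)

lemma AgreeBelow.mono {B B' : ℕ} {X Y : Set ℕ} (h : AgreeBelow B' X Y) (hB : B ≤ B') :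
    AgreeBelow B X Y :=
  fun x hx => h x (hx.trans_le hB)

lemma IsDelta0.exists_use {φ : Formula} (h : IsDelta0 φ) (v : ℕ → ℕ) :
    ∃ B, ∀ V V' : ℕ → Set ℕ, (∀ i, AgreeBelow B (V i) (V' i)) →
      (φ.Sat stdM univ v V ↔ φ.Sat stdM univ v V') := by
  induction h generalizing v with
  | eq | lt => exact ⟨0, fun _ _ _ => Iff.rfl⟩
  | mem t X => exact ⟨t.val stdM v + 1, fun V V' hV => hV X _ (Nat.lt_succ_self _)⟩
  | not _ ih =>
    obtain ⟨B, hB⟩ := ih v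
    exact ⟨B, fun V V' hV => not_congr (hB V V' hV)⟩
  | and _ _ ih₁ ih₂ | or _ _ ih₁ ih₂ | imp _ _ ih₁ ih₂ =>
    obtain ⟨B₁, hB₁⟩ := ih₁ v
    obtain ⟨B₂, hB₂⟩ := ih₂ v
    refine ⟨max B₁ B₂, fun V V' hV => ?_⟩
    have h₁ := hB₁ V V' fun i => (hV i).mono (le_max_left _ _)
    have h₂ := hB₂ V V' fun i => (hV i).mono (le_max_right _ _)
    simp only [Formula.Sat, h₁, h₂]
  | ballLt x t hx _ ih | bexLt x t hx _ ih =>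
    choose B hB using ih
    refine ⟨(Finset.range (t.val stdM v)).sup fun a => B (Function.update v x a),
      fun V V' hV => ?_⟩
    have key : ∀ a < t.val stdM v, _ := fun a ha =>
      hB (Function.update v x a) V V' fun i => (hV i).mono
        (Finset.le_sup (f := fun a => B (Function.update v x a)) (Finset.mem_range.2 ha))
    simp only [Formula.Sat, Term.val, Function.update_self,
      Term.val_update_of_notMem_fv _ hx]
    first
    | exact forall_congr' fun a => imp_congr_right (key a)
    | exact exists_congr fun a => and_congr_right (key a)

lemma IsSigma01.exists_use {φ : Formula} (h : IsSigma01 φ) {v : ℕ → ℕ} {V : ℕ → Set ℕ}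
    (hφ : φ.Sat stdM univ v V) :
    ∃ B, ∀ V' : ℕ → Set ℕ, (∀ i, AgreeBelow B (V i) (V' i)) →
      φ.Sat stdM univ v V' := by
  induction h generalizing v with
  | delta0 h₀ =>
    obtain ⟨B, hB⟩ := h₀.exists_use v
    exact ⟨B, fun V' hV => (hB V V' hV).1 hφ⟩
  | exN x _ ih =>
    obtain ⟨a, ha⟩ := hφ
    obtain ⟨B, hB⟩ := ih ha
    exact ⟨B, fun V' hV => ⟨a, hB V' hV⟩⟩

end Semantics

section CantorSpace

variable {E : ℕ → Type*} [∀ n, TopologicalSpace (E n)] [∀ n, DiscreteTopology (E n)]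

lemma isOpen_iff_forall_exists_cylinder_subset {s : Set (∀ n, E n)} :
    IsOpen s ↔ ∀ x ∈ s, ∃ n, cylinder x n ⊆ s := by
  rw [(isTopologicalBasis_cylinders E).isOpen_iff]
  constructor
  · intro h x hx
    obtain ⟨_, ⟨y, n, rfl⟩, hxy, hs⟩ := h x hx
    exact ⟨n, mem_cylinder_iff_eq.1 hxy ▸ hs⟩
  · intro h x hx
    obtain ⟨n, hn⟩ := h x hx
    exact ⟨_, ⟨x, n, rfl⟩, self_mem_cylinder x n, hn⟩

lemma isClosed_cylinder (x : ∀ n, E n) (n : ℕ) : IsClosed (cylinder x n) := by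
  rw [cylinder_eq_pi]
  exact isClosed_set_pi fun _ _ => isClosed_discrete _

end CantorSpace

lemma nonempty_inter_iInter_of_forall_inter_nonempty {X : Type*} [TopologicalSpace X]
    [BaireSpace X] {O : Set X} {K : ℕ → Set X} (hO : IsOpen O) (hne : O.Nonempty)
    (hK : ∀ n, IsOpen (K n))
    (hdense : ∀ n U, IsOpen U → U.Nonempty → U ⊆ O → (U ∩ K n).Nonempty) :
    (O ∩ ⋂ n, K n).Nonempty := by
  have hG : Dense (⋂ n, K n ∪ (closure O)ᶜ) := by
    refine dense_iInter_of_isOpen_nat (fun n => (hK n).union isClosed_closure.isOpen_compl)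
      fun n => dense_iff_inter_open.2 fun U hU hUne => ?_
    by_cases hUO : (U ∩ O).Nonempty
    · obtain ⟨x, hxUO, hxK⟩ := hdense n (U ∩ O) (hU.inter hO) hUO inter_subset_right
      exact ⟨x, hxUO.1, Or.inl hxK⟩
    · obtain ⟨x, hx⟩ := hUne
      exact ⟨x, hx, Or.inr fun hxO => hUO (mem_closure_iff.1 hxO U hU hx)⟩
  obtain ⟨x, hxO, hx⟩ := hG.inter_open_nonempty O hO hne
  exact ⟨x, hxO, mem_iInter.2 fun n =>
    (mem_iInter.1 hx n).resolve_right (not_not.2 (subset_closure hxO))⟩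

section Coding

/-- The value of the pairing term `pairT` in the standard model. -/
def pairN (x v : ℕ) : ℕ := (x + v) * (x + v) + x

lemma pairN_inj {x v y w : ℕ} (h : pairN x v = pairN y w) : x = y ∧ v = w := by
  have hs : x + v = y + w := by
    rw [← Nat.sqrt_add_eq (x + v) (a := x) (by omega),
      ← Nat.sqrt_add_eq (y + w) (a := y) (by omega)]
    exact congrArg Nat.sqrt h
  unfold pairN at h
  rw [hs] at h
  omega

lemma cantorPairRel_std_inj {i j i' j' e : ℕ} (h : cantorPairRel stdM i j e)
    (h' : cantorPairRel stdM i' j' e) : i = i' ∧ j = j' := by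
  have h₁ : e + e = (i + j) * (i + j) + (i + j) + (i + i) := h
  have h₂ : e + e = (i' + j') * (i' + j') + (i' + j') + (i' + i') := h'
  have strictMono : ∀ a b a' b' : ℕ, a + b < a' + b' →
      (a + b) * (a + b) + (a + b) + (a + a) < (a' + b') * (a' + b') + (a' + b') + (a' + a') :=
    fun a b a' b' hlt => by nlinarith
  have hs : i + j = i' + j' := by
    rcases lt_trichotomy (i + j) (i' + j') with hc | hc | hc
    · exact absurd (strictMono _ _ _ _ hc) (by omega)
    · exact hc
    · exact absurd (strictMono _ _ _ _ hc) (by omega)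
  rw [hs] at h₁
  omega

lemma numM_std (e : ℕ) : numM stdM e = e := by
  induction e with
  | zero => rfl
  | succ e ih => exact congrArg (· + 1) ih

def codeColoring (d : ℕ → Bool) : Set ℕ := {m | ∃ x, m = pairN x (d x).toNat}

lemma pairN_mem_codeColoring {d : ℕ → Bool} {x v : ℕ} :
    pairN x v ∈ codeColoring d ↔ v = (d x).toNat := by
  constructor
  · rintro ⟨y, hy⟩
    obtain ⟨rfl, rfl⟩ := pairN_inj hy
    rfl
  · rintro rfl
    exact ⟨x, rfl⟩

lemma RTn_one_two_inst_codeColoring (d : ℕ → Bool) : (RTn 1 2).Inst stdM (codeColoring d) := by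
  simp only [Pi12Problem.Inst, RTn, allNs, chainLt, varsCode, pairT, Term.ofNat, trueF,
    Formula.Sat, Term.val, Function.update_apply]
  norm_num
  exact fun x => ⟨(d x).toNat, Bool.toNat_le _, pairN_mem_codeColoring.2 rfl,
    fun w hw => pairN_mem_codeColoring.1 hw⟩

lemma RTn_one_two_sol_codeColoring {d : ℕ → Bool} {Y : Set ℕ}
    (h : (RTn 1 2).Sol stdM (codeColoring d) Y) :
    (∀ c, ∃ z ∈ Y, c < z) ∧ ∃ b, ∀ z ∈ Y, d z = b := by
  simp only [Pi12Problem.Sol, RTn, allNs, chainLt, allMemS, varsCode, pairT, Term.ofNat, trueF,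
    infiniteF, Formula.Sat, Term.val, Function.update_apply] at h
  norm_num at h
  obtain ⟨hinf, v, -, hv⟩ := h
  obtain ⟨z₀, -, hz₀⟩ := hinf 0
  refine ⟨fun c => (hinf c).imp fun z hz => ⟨hz.2, hz.1⟩, d z₀, fun z hz => ?_⟩
  have h := (pairN_mem_codeColoring.1 (hv z hz)).symm.trans
    (pairN_mem_codeColoring.1 (hv z₀ hz₀))
  revert h
  cases d z <;> cases d z₀ <;> simp

lemma CN_inst_spec {W : Set ℕ} (h : CN.Inst stdM W) : ∃ q, ∀ s, pairN q s ∉ W := by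
  simp only [Pi12Problem.Inst, CN, pairT, Formula.Sat, Term.val, Function.update_apply] at h
  norm_num at h
  exact h

lemma CN_sol_singleton {W : Set ℕ} {q : ℕ} (h : ∀ s, pairN q s ∉ W) :
    CN.Sol stdM W {q} := by
  simp only [Pi12Problem.Sol, CN, pairT, Formula.Sat, Term.val, Function.update_apply]
  norm_num
  exact h

end Coding

section Oracle

def run (d : ℕ → Bool) (a : ℕ → ℕ) : ℕ → Set ℕ
  | 0 => codeColoring d
  | l + 1 => {a l}

def oracle (d : ℕ → Bool) (a : ℕ → ℕ) (m : ℕ) : Set ℕ :=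
  joinList stdM (histL stdM (run d a) m)

lemma oracle_congr {d : ℕ → Bool} {a a' : ℕ → ℕ} {m : ℕ} (h : ∀ l < m, a l = a' l) :
    oracle d a m = oracle d a' m := by
  unfold oracle histL
  congr 1
  refine List.map_congr_left fun l hl => ?_
  rcases l with _ | l
  · rfl
  · simp only [run, h l (by simpa using hl)]

lemma oracle_eq_foldl (d : ℕ → Bool) (a : ℕ → ℕ) (m : ℕ) :
    oracle d a m =
      ((List.range m).map fun l => ({a l} : Set ℕ)).foldl (joinM stdM) (codeColoring d) := by
  simp only [oracle, histL, List.range_succ_eq_map, List.map_cons, List.map_map]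
  rfl

lemma agreeBelow_codeColoring {d d' : ℕ → Bool} {B : ℕ} (h : d' ∈ cylinder d B) :
    AgreeBelow B (codeColoring d) (codeColoring d') := by
  have key : ∀ {d d' : ℕ → Bool}, (∀ y < B, d y = d' y) →
      ∀ x < B, x ∈ codeColoring d → x ∈ codeColoring d' :=
    fun hdd' x hx ⟨y, hy⟩ => ⟨y, by
      rw [← hdd' y (by unfold pairN at hy; omega)]
      exact hy⟩
  exact fun x hx => ⟨key (fun y hy => (h y hy).symm) x hx, key h x hx⟩

lemma AgreeBelow.joinM_left {B : ℕ} {X X' : Set ℕ} (h : AgreeBelow B X X') (Y : Set ℕ) :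
    AgreeBelow B (joinM stdM X Y) (joinM stdM X' Y) := by
  intro x hx
  refine or_congr_left ⟨?_, ?_⟩ <;> rintro ⟨(c : ℕ), hc, rfl⟩ <;> refine ⟨c, ?_, rfl⟩
  all_goals have hcB : c < B := by change c + c < B at hx; omega
  exacts [(h c hcB).1 hc, (h c hcB).2 hc]

lemma AgreeBelow.foldl_joinM {B : ℕ} {X X' : Set ℕ} (h : AgreeBelow B X X')
    (L : List (Set ℕ)) :
    AgreeBelow B (L.foldl (joinM stdM) X) (L.foldl (joinM stdM) X') := by
  induction L generalizing X X' with
  | nil => exact h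
  | cons Y L ih => exact ih (h.joinM_left Y)

lemma agreeBelow_oracle {d d' : ℕ → Bool} {B : ℕ} (h : d' ∈ cylinder d B)
    (a : ℕ → ℕ) (m : ℕ) :
    AgreeBelow B (oracle d a m) (oracle d' a m) := by
  rw [oracle_eq_foldl, oracle_eq_foldl]
  exact (agreeBelow_codeColoring h).foldl_joinM _

end Oracle

section Strategy

variable (θ : Formula) (k : Nat.Partrec.Code)

/-- The set `Z = Φ_e^{X₀⊕⋯⊕X_m}` coding the move of the strategy `k` at stage `m`,
where `e = Φ_k(m)` and `e = ⟨i, j⟩`. -/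
def output (d : ℕ → Bool) (a : ℕ → ℕ) (m : ℕ) : Set ℕ :=
  {x | ∃ e ∈ k.eval m, ∃ i j, cantorPairRel stdM i j e ∧ satIdx θ stdM i x (oracle d a m)}

def Declares (d : ℕ → Bool) (a : ℕ → ℕ) (m : ℕ) : Prop := 0 ∈ output θ k d a m

def payload (d : ℕ → Bool) (a : ℕ → ℕ) (m : ℕ) : Set ℕ :=
  {x | x + 1 ∈ output θ k d a m}

/-- The answer `q` is enumerated out of the `C_ℕ`-instance played at stage `m`. -/
def Excludes (q : ℕ) (d : ℕ → Bool) (a : ℕ → ℕ) (m : ℕ) : Prop :=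
  ∃ s, pairN q s ∈ payload θ k d a m

/-- Before stage `m` Player 2 never declared victory and every answer of Player 1 was legal. -/
def Survives (d : ℕ → Bool) (a : ℕ → ℕ) (m : ℕ) : Prop :=
  ∀ l < m, ¬ Declares θ k d a l ∧ ¬ Excludes θ k (a l) d a l

variable {θ}

lemma isOpen_setOf_mem_output (hθ : IsSigma01 θ) (a : ℕ → ℕ) (m x : ℕ) :
    IsOpen {d | x ∈ output θ k d a m} := by
  rw [isOpen_iff_forall_exists_cylinder_subset]
  rintro d ⟨e, he, i, j, hij, hsat⟩
  obtain ⟨B, hB⟩ := hθ.exists_use hsat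
  exact ⟨B, fun d' hd' => ⟨e, he, i, j, hij, hB _ fun _ => agreeBelow_oracle hd' a m⟩⟩

lemma isOpen_setOf_excludes (hθ : IsSigma01 θ) (a : ℕ → ℕ) (m q : ℕ) :
    IsOpen {d | Excludes θ k q d a m} := by
  simp only [Excludes, ofPred_exists]
  exact isOpen_iUnion fun s => isOpen_setOf_mem_output k hθ a m _

variable {k} {d : ℕ → Bool} {a a' : ℕ → ℕ} {m : ℕ}

lemma output_congr (h : ∀ l < m, a l = a' l) : output θ k d a m = output θ k d a' m := by
  simp only [output, oracle_congr h]

lemma survives_congr (h : ∀ l < m, a l = a' l) :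
    Survives θ k d a m ↔ Survives θ k d a' m := by
  refine forall₂_congr fun l hl => ?_
  simp only [Declares, Excludes, payload, output_congr fun i hi => h i (hi.trans hl), h l hl]

lemma survives_succ :
    Survives θ k d a (m + 1) ↔
      Survives θ k d a m ∧ ¬ Declares θ k d a m ∧ ¬ Excludes θ k (a m) d a m := by
  simp only [Survives, Nat.forall_lt_succ_right]

lemma eq_of_codeMove {n : ℕ} {mv : Prop × Set ℕ}
    (h : CodeMove θ stdM k (histL stdM (run d a) n) mv) :
    mv = (Declares θ k d a n, payload θ k d a n) := by
  obtain ⟨e, he, Z, ⟨i, j, hij, -, hZ⟩, rfl⟩ := h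
  simp only [histL, List.length_map, List.length_range, Nat.add_sub_cancel] at he
  rw [numM_std] at hij
  have hZ' : Z = output θ k d a n := by
    ext x
    refine (hZ x).trans ⟨fun hx => ⟨e, he, i, j, hij, hx⟩, ?_⟩
    rintro ⟨e', he', i', j', hij', hx⟩
    obtain rfl := Part.mem_unique he he'
    obtain ⟨rfl, -⟩ := cantorPairRel_std_inj hij hij'
    exact hx
  subst hZ'
  rfl

end Strategy

section Game

variable {θ : Formula} {k : Nat.Partrec.Code}

def p2Moves (θ : Formula) (k : Nat.Partrec.Code) (d : ℕ → Bool) (a : ℕ → ℕ) :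
    ℕ → Prop × Set ℕ :=
  fun n => (Declares θ k d a n, payload θ k d a n)

variable (hH : P2CompWinsC θ k (RTn 1 2) CN stdM (fun _ => True))
  {d : ℕ → Bool} {a : ℕ → ℕ}
include hH

lemma codeMove_of_alive (n : ℕ)
    (hn : Alive (RTn 1 2) CN stdM (fun _ => True) (run d a) (p2Moves θ k d a) n) :
    CodeMove θ stdM k (histL stdM (run d a) n) (p2Moves θ k d a n) := by
  induction n using Nat.strong_induction_on with
  | _ n ih =>
    obtain ⟨mv, hmv⟩ := (hH _ _).1 n ih hn
    rwa [eq_of_codeMove hmv] at hmv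

lemma p2WinsRun_p2Moves :
    P2WinsRun (RTn 1 2) CN stdM (fun _ => True) (run d a) (p2Moves θ k d a) :=
  (hH _ _).2 (codeMove_of_alive hH)

lemma alive_of_survives : ∀ {m}, Survives θ k d a m →
    Alive (RTn 1 2) CN stdM (fun _ => True) (run d a) (p2Moves θ k d a) m
  | 0, _ => ⟨RTn_one_two_inst_codeColoring d, trivial⟩
  | n + 1, h => by
    obtain ⟨hs, hnd, hne⟩ := survives_succ.1 h
    have hn := alive_of_survives hs
    rcases (p2WinsRun_p2Moves hH).1 n hn with ⟨hcont, hboard, hinst⟩ | ⟨hwin, -⟩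
    · exact ⟨hn, hcont, hboard, hinst, CN_sol_singleton fun s hs => hne ⟨s, hs⟩, trivial⟩
    · exact absurd hwin hnd

lemma sol_of_declares {m : ℕ} (hs : Survives θ k d a m) (hd : Declares θ k d a m) :
    (RTn 1 2).Sol stdM (codeColoring d) (payload θ k d a m) := by
  rcases (p2WinsRun_p2Moves hH).1 m (alive_of_survives hH hs) with ⟨hnd, -⟩ | ⟨-, -, hsol⟩
  · exact absurd hd hnd
  · exact hsol

lemma exists_not_excludes {m : ℕ} (hs : Survives θ k d a m) (hnd : ¬ Declares θ k d a m) :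
    ∃ q, ¬ Excludes θ k q d a m := by
  rcases (p2WinsRun_p2Moves hH).1 m (alive_of_survives hH hs) with ⟨-, -, hinst⟩ | ⟨hd, -⟩
  · obtain ⟨q, hq⟩ := CN_inst_spec hinst
    exact ⟨q, fun ⟨s, hs⟩ => hq s hs⟩
  · exact absurd hd hnd

lemma not_forall_survives : ¬ ∀ m, Survives θ k d a m :=
  fun h => (p2WinsRun_p2Moves hH).2 fun n => alive_of_survives hH (h n)

end Game

section Forcing

variable {θ : Formula} {k : Nat.Partrec.Code} (hθ : IsSigma01 θ)
  (hH : P2CompWinsC θ k (RTn 1 2) CN stdM (fun _ => True)) {a : ℕ → ℕ} {m : ℕ}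
include hθ hH

/-- Were victory declared at some `d₀ ∈ O`, fix `x` in the proposed homogeneous set; this
persists on a cylinder around `d₀`, and recoloring everything beyond it with the color
opposite to `d₀ x` spoils homogeneity. -/
lemma not_declares_of_isOpen {O : Set (ℕ → Bool)} (hO : IsOpen O)
    (hs : ∀ d ∈ O, Survives θ k d a m) : ∀ d ∈ O, ¬ Declares θ k d a m := by
  intro d₀ hd₀ hdecl₀
  have hsol : ∀ d ∈ O, Declares θ k d a m →
      (RTn 1 2).Sol stdM (codeColoring d) (payload θ k d a m) :=
    fun d hd => sol_of_declares hH (hs d hd)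
  obtain ⟨x, hx, -⟩ := (RTn_one_two_sol_codeColoring (hsol d₀ hd₀ hdecl₀)).1 0
  have hU : IsOpen (O ∩ {d | Declares θ k d a m} ∩ {d | x ∈ payload θ k d a m}) :=
    (hO.inter (isOpen_setOf_mem_output k hθ a m 0)).inter (isOpen_setOf_mem_output k hθ a m _)
  obtain ⟨u, hu⟩ :=
    isOpen_iff_forall_exists_cylinder_subset.1 hU d₀ ⟨⟨hd₀, hdecl₀⟩, hx⟩
  let D : ℕ → Bool := fun y => if y < max u (x + 1) then d₀ y else !d₀ x
  obtain ⟨⟨hDO, hDdecl⟩, hDx⟩ := hu fun y hy => if_pos (lt_max_of_lt_left hy)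
  obtain ⟨hinf, b, hb⟩ := RTn_one_two_sol_codeColoring (hsol D hDO hDdecl)
  obtain ⟨z, hz, hzu⟩ := hinf (max u (x + 1))
  have hDxz : D x = D z := (hb x hDx).trans (hb z hz).symm
  simp only [D, if_pos (lt_max_of_lt_right (Nat.lt_succ_self x)), if_neg hzu.not_gt] at hDxz
  exact Bool.not_ne_self _ hDxz.symm

/-- If on every open subset of `O` each answer is refuted somewhere, then by the Baire category
theorem some `d ∈ O` refutes all answers, and Player 2's `C_ℕ`-instance at `d` is empty. -/
lemma exists_safe_answer {O : Set (ℕ → Bool)} (hO : IsOpen O) (hne : O.Nonempty)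
    (hs : ∀ d ∈ O, Survives θ k d a m) :
    ∃ q, ∃ U ⊆ O, IsOpen U ∧ U.Nonempty ∧ ∀ d ∈ U, ¬ Excludes θ k q d a m := by
  by_contra! h
  obtain ⟨d, hdO, hd⟩ := nonempty_inter_iInter_of_forall_inter_nonempty hO hne
    (isOpen_setOf_excludes k hθ a m) fun q U hU hUne hUO => h q U hUO hU hUne
  obtain ⟨q, hq⟩ :=
    exists_not_excludes hH (hs d hdO) (not_declares_of_isOpen hθ hH hO hs d hdO)
  exact hq (mem_iInter.1 hd q)

lemma exists_cylinder_survives_succ {c : ℕ → Bool} {u : ℕ}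
    (hs : ∀ d ∈ cylinder c u, Survives θ k d a m) :
    ∃ c' u' q, cylinder c' u' ⊆ cylinder c u ∧
      ∀ d ∈ cylinder c' u', Survives θ k d (Function.update a m q) (m + 1) := by
  obtain ⟨q, U, hUO, hU, ⟨d₀, hd₀⟩, hsafe⟩ :=
    exists_safe_answer hθ hH (isOpen_cylinder _ c u) ⟨c, self_mem_cylinder c u⟩ hs
  obtain ⟨n, hn⟩ := isOpen_iff_forall_exists_cylinder_subset.1 hU d₀ hd₀
  refine ⟨d₀, n, q, hn.trans hUO, fun d hd => ?_⟩
  have hagree : ∀ l < m, Function.update a m q l = a l :=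
    fun l hl => Function.update_of_ne hl.ne _ _
  rw [survives_succ, survives_congr hagree, Declares, Excludes, payload, output_congr hagree,
    Function.update_self]
  exact ⟨hs d (hUO (hn hd)),
    not_declares_of_isOpen hθ hH (isOpen_cylinder _ c u) hs d (hUO (hn hd)), hsafe d (hn hd)⟩

end Forcing

section Limit

variable {θ : Formula} {k : Nat.Partrec.Code}

structure Position where
  c : ℕ → Bool
  u : ℕ
  a : ℕ → ℕ

def Position.Valid (θ : Formula) (k : Nat.Partrec.Code) (n : ℕ) (p : Position) : Prop :=
  ∀ d ∈ cylinder p.c p.u, Survives θ k d p.a n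

lemma exists_seq_position_valid (hθ : IsSigma01 θ)
    (hH : P2CompWinsC θ k (RTn 1 2) CN stdM (fun _ => True)) :
    ∃ p : ℕ → Position, (∀ n, (p n).Valid θ k n) ∧
      (∀ n, cylinder (p (n + 1)).c (p (n + 1)).u ⊆ cylinder (p n).c (p n).u) ∧
      ∀ n, ∀ l < n, (p (n + 1)).a l = (p n).a l := by
  have hstep : ∀ n (p : {p : Position // p.Valid θ k n}),
      ∃ p' : {p' : Position // p'.Valid θ k (n + 1)},
        cylinder p'.1.c p'.1.u ⊆ cylinder p.1.c p.1.u ∧ ∀ l < n, p'.1.a l = p.1.a l := by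
    rintro n ⟨⟨c, u, a⟩, hp⟩
    obtain ⟨c', u', q, hsub, hs⟩ := exists_cylinder_survives_succ hθ hH hp
    exact ⟨⟨⟨c', u', Function.update a n q⟩, hs⟩, hsub,
      fun l hl => Function.update_of_ne hl.ne _ _⟩
  choose next hnext using hstep
  let start : {p : Position // p.Valid θ k 0} :=
    ⟨⟨fun _ => false, 0, fun _ => 0⟩, fun _ _ l hl => absurd hl l.not_lt_zero⟩
  let p : ∀ n, {p : Position // p.Valid θ k n} := fun n => Nat.rec start next n
  exact ⟨fun n => (p n).1, fun n => (p n).2, fun n => (hnext n (p n)).1,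
    fun n => (hnext n (p n)).2⟩

theorem not_p2CompWinsC_RTn_one_two_CN (hθ : IsSigma01 θ) :
    ¬ P2CompWinsC θ k (RTn 1 2) CN stdM (fun _ => True) := by
  intro hH
  obtain ⟨p, hvalid, hsub, hstable⟩ := exists_seq_position_valid hθ hH
  obtain ⟨d, hd⟩ := IsCompact.nonempty_iInter_of_sequence_nonempty_isCompact_isClosed
    (fun n => cylinder (p n).c (p n).u) hsub
    (fun n => ⟨(p n).c, self_mem_cylinder _ _⟩) (isClosed_cylinder _ _).isCompact
    fun n => isClosed_cylinder _ _
  let a : ℕ → ℕ := fun l => (p (l + 1)).a l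
  have ha : ∀ n, ∀ l < n, (p n).a l = a l := by
    intro n l hl
    induction n, hl using Nat.le_induction with
    | base => rfl
    | succ n hln ih => rw [hstable n l hln, ih]
  exact not_forall_survives hH fun n =>
    (survives_congr (ha n)).1 (hvalid n d (mem_iInter.1 hd n))

end Limit

/-- `RT¹₂ ≰_gW C_ℕ`: Player 2 has no computable winning strategy for the reduction game
`G(C_ℕ → RT¹₂)` over the standard natural numbers (for any choice of universal Σ⁰₁
formula). -/
theorem statement16 :
    ¬ ∃ θ : Formula, UnivSigma01Std θ ∧ P2CompWinsStd θ (RTn 1 2) CN := by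
  rintro ⟨θ, huniv, k, hH⟩
  exact not_p2CompWinsC_RTn_one_two_CN huniv.1.1 hH

end SOA
end
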